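/- arXiv:1801.02023 — 5 statements merged into one kernel-verified Lean document; each statement's English description precedes it below -/
import Mathlib

section
/- Let p ≥ 2, s ≥ 0, ℓ ≥ 5. Let C be a connected B_{ℓ,s}-free graph and v ∈ V(C) with d_C(v) = Δ(C) ≥ ℓ + s − 1. Suppose that for some t ≥ 2, C contains an x-pendent spindle S = C[{x,z,y_1,…,y_t}] with x,z,y_1,…,y_t ∈ V(C)∖{v}, and let C' be the graph obtained from C by deleting the 2t edges xy_k, zy_k (1 ≤ k ≤ t) and adding the edges vz, vy_1, …, vy_t. Then C' is B_{ℓ,s}-free, d_{C'}(v) = Δ(C') ≥ ℓ + s − 1, and e_p(C) < e_p(C'). -/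
open Finset

namespace Paper

/-- `Copy H G`: `G` contains a subgraph isomorphic to `H`. -/
def Copy {α β : Type*} (H : SimpleGraph α) (G : SimpleGraph β) : Prop :=
  ∃ f : α ↪ β, ∀ a b, H.Adj a b → G.Adj (f a) (f b)

/-- `G` is `H`-free. -/
def Free {α β : Type*} (H : SimpleGraph α) (G : SimpleGraph β) : Prop := ¬ Copy H G

/-- Degree of a vertex. -/
noncomputable def degp {V : Type*} (G : SimpleGraph V) (v : V) : ℕ := (G.neighborSet v).ncard

/-- Degree power sum `e_p(G)`. -/
noncomputable def ep {V : Type*} [Fintype V] (p : ℕ) (G : SimpleGraph V) : ℕ :=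
  ∑ v, degp G v ^ p

/-- `ex_p(n, H)`. -/
noncomputable def exDP {α : Type*} (n p : ℕ) (H : SimpleGraph α) : ℕ :=
  sSup {m | ∃ G : SimpleGraph (Fin n), Free H G ∧ ep p G = m}

/-- Join `G + H`. -/
def joinG {α β : Type*} (G : SimpleGraph α) (H : SimpleGraph β) : SimpleGraph (α ⊕ β) :=
  SimpleGraph.fromRel (fun x y =>
    match x, y with
    | Sum.inl a, Sum.inl a' => G.Adj a a'
    | Sum.inr b, Sum.inr b' => H.Adj b b'
    | Sum.inl _, Sum.inr _ => True
    | Sum.inr _, Sum.inl _ => False)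

/-- `M_t`: maximum matching on `t` vertices. -/
def matchG (t : ℕ) : SimpleGraph (Fin t) :=
  SimpleGraph.fromRel (fun i j => (i : ℕ) / 2 = (j : ℕ) / 2)

/-- `S_r`: star with `r` leaves. -/
def starG (r : ℕ) : SimpleGraph (Fin (r + 1)) :=
  SimpleGraph.fromRel (fun i _ => i = 0)

/-- Disjoint union of graphs. -/
def forestG {k : ℕ} (m : Fin k → ℕ) (G : ∀ i, SimpleGraph (Fin (m i))) :
    SimpleGraph ((i : Fin k) × Fin (m i)) :=
  SimpleGraph.fromRel (fun x y => ∃ h : x.1 = y.1, (G y.1).Adj (h ▸ x.2) y.2)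

/-- Path on `t` vertices. -/
def pathG (t : ℕ) : SimpleGraph (Fin t) := SimpleGraph.pathGraph t

/-- `H(n, ℓ)`. -/
def HG (n ℓ : ℕ) : SimpleGraph (Fin n) :=
  SimpleGraph.fromRel (fun i j =>
    (i : ℕ) < ℓ / 2 - 1 ∨ (Odd ℓ ∧ (i : ℕ) = ℓ / 2 - 1 ∧ (j : ℕ) = ℓ / 2))

/-- `H(n, F)` for a linear forest with path orders `ℓ`. -/
def HGF (n : ℕ) {k : ℕ} (ℓ : Fin k → ℕ) : SimpleGraph (Fin n) :=
  SimpleGraph.fromRel (fun i j =>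
    (i : ℕ) < (∑ t, ℓ t / 2) - 1 ∨
    ((∀ t, Odd (ℓ t)) ∧ (i : ℕ) = (∑ t, ℓ t / 2) - 1 ∧ (j : ℕ) = ∑ t, ℓ t / 2))

/-- The broom `B_{ℓ,s}`. -/
def broomG (ℓ s : ℕ) : SimpleGraph (Fin (ℓ + s)) :=
  SimpleGraph.fromRel (fun i j =>
    ((i : ℕ) + 1 = (j : ℕ) ∧ (j : ℕ) < ℓ) ∨ ((i : ℕ) = ℓ - 2 ∧ ℓ ≤ (j : ℕ)))

/-- Near `(r-1)`-regular graph. -/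
def NearRegular {V : Type*} [Fintype V] (r : ℕ) (L : SimpleGraph V) : Prop :=
  if Even ((r - 1) * Fintype.card V) then ∀ v, degp L v = r - 1
  else ∃ w, degp L w = r - 2 ∧ ∀ v, v ≠ w → degp L v = r - 1


private lemma aux_L2 (t : ℕ) : ∀ q m : ℕ, (m+t)^(q+1) ≤ m^(q+1) + t*(q+1)*(m+t)^q := by
  intro q
  induction q with
  | zero => intro m; simp [pow_succ]
  | succ q ih =>
    intro m
    calc (m+t)^(q+2) = (m+t)^(q+1) * (m+t) := by ring
    _ ≤ (m^(q+1) + t*(q+1)*(m+t)^q) * (m+t) := Nat.mul_le_mul_right _ (ih m)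
    _ = m^(q+1)*m + t*m^(q+1) + t*(q+1)*((m+t)^q*(m+t)) := by ring
    _ ≤ m^(q+1)*m + t*(m+t)^(q+1) + t*(q+1)*((m+t)^q*(m+t)) := by
        gcongr; · exact Nat.le_add_right m t
    _ = m^(q+2) + t*(q+2)*(m+t)^(q+1) := by ring

private lemma aux_L1 (p t c e : ℕ) (h : c ≤ e) : (c+t)^p + e^p ≤ (e+t)^p + c^p := by
  have hc : (c+t)^p = ∑ i ∈ range (p+1), c^i * t^(p-i) * p.choose i := add_pow c t p
  have he : (e+t)^p = ∑ i ∈ range (p+1), e^i * t^(p-i) * p.choose i := add_pow e t p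
  rw [hc, he, Finset.sum_range_succ, Finset.sum_range_succ]
  simp only [Nat.sub_self, pow_zero, Nat.choose_self, mul_one]
  have : ∑ i ∈ range p, c^i * t^(p-i) * p.choose i ≤ ∑ i ∈ range p, e^i * t^(p-i) * p.choose i := by
    apply Finset.sum_le_sum
    intro i _
    exact Nat.mul_le_mul_right _ (Nat.mul_le_mul_right _ (Nat.pow_le_pow_left h i))
  omega

private lemma aux_L3 (p a b : ℕ) (hp : 3 ≤ p) :
    a^p + p*a^(p-1)*b + p*a*b^(p-1) + b^p ≤ (a+b)^p := by
  have hab : (a+b)^p = ∑ i ∈ range (p+1), a^i * b^(p-i) * p.choose i := add_pow a b p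
  rw [hab]
  have hsub : ({0, 1, p-1, p} : Finset ℕ) ⊆ range (p+1) := by
    intro i hi; simp only [mem_insert, mem_singleton] at hi; rcases hi with h|h|h|h <;> simp [h] <;> omega
  have := Finset.sum_le_sum_of_subset (f := fun i => a^i * b^(p-i) * p.choose i) hsub
  refine le_trans ?_ this
  have h0 : (0:ℕ) ∉ ({1, p-1, p} : Finset ℕ) := by simp; omega
  have h1 : (1:ℕ) ∉ ({p-1, p} : Finset ℕ) := by simp; omega
  have h2 : (p-1) ∉ ({p} : Finset ℕ) := by simp; omega
  rw [show ({0, 1, p-1, p} : Finset ℕ) = insert 0 (insert 1 (insert (p-1) {p})) from rfl,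
    Finset.sum_insert h0, Finset.sum_insert h1, Finset.sum_insert h2, Finset.sum_singleton]
  have e0 : a^0 * b^(p-0) * p.choose 0 = b^p := by simp
  have e1 : a^1 * b^(p-1) * p.choose 1 = p*a*b^(p-1) := by simp [Nat.choose_one_right]; ring
  have e2 : a^(p-1) * b^(p-(p-1)) * p.choose (p-1) = p*a^(p-1)*b := by
    rw [show p - (p-1) = 1 by omega,
      Nat.choose_symm (by omega : 1 ≤ p), Nat.choose_one_right]
    ring
  have e3 : a^p * b^(p-p) * p.choose p = a^p := by simp
  rw [e0, e1, e2, e3]; ring_nf; omega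

private lemma aux_main (p t u : ℕ) (hp : 2 ≤ p) (ht : 2 ≤ t) (hd : 4 ≤ t + u) :
    2*(t+u)^p + t^p + t*2^p < ((t+u)+(t+1))^p + u^p + t + 1 := by
  rcases Nat.lt_or_ge p 3 with h3 | h3
  · have : p = 2 := by omega
    subst this
    nlinarith [sq_nonneg t, sq_nonneg u]
  · set a := t + u with ha
    set b := t + 1 with hb
    have hL3 := aux_L3 p a b h3
    have hL2 : a^p ≤ u^p + t*p*a^(p-1) := by
      have := aux_L2 t (p-1) u
      have hq : p - 1 + 1 = p := by omega
      rw [hq] at this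
      calc a^p = (u+t)^p := by rw [ha]; ring_nf
      _ ≤ u^p + t*p*(u+t)^(p-1) := this
      _ = u^p + t*p*a^(p-1) := by rw [ha]; ring_nf
    have h1 : 1 ≤ p*a^(p-1) := by
      have : 1 ≤ a := by omega
      exact Nat.one_le_iff_ne_zero.mpr (by positivity)
    have h2 : t*2^p ≤ p*a*b^(p-1) := by
      have h2p : (2:ℕ)^p = 2*2^(p-1) := by
        rw [← pow_succ']; congr 1; omega
      calc t*2^p = 2*t*2^(p-1) := by rw [h2p]; ring
      _ ≤ p*a*b^(p-1) := by
          apply Nat.mul_le_mul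
          · apply Nat.mul_le_mul (by omega); omega
          · exact Nat.pow_le_pow_left (by omega) _
    have h4 : t^p + 1 ≤ b^p := by
      have := Nat.pow_lt_pow_left (show t < b by omega) (show p ≠ 0 by omega)
      omega
    have hexp : p*a^(p-1)*b = p*a^(p-1)*t + p*a^(p-1) := by rw [hb]; ring
    have key : a^p + (u^p + t*p*a^(p-1)) + p*a^(p-1) + p*a*b^(p-1) + b^p ≤ (a+b)^p + u^p := by
      calc a^p + (u^p + t*p*a^(p-1)) + p*a^(p-1) + p*a*b^(p-1) + b^p
          = (a^p + p*a^(p-1)*b + p*a*b^(p-1) + b^p) + u^p := by rw [hexp]; ring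
      _ ≤ (a+b)^p + u^p := by omega
    omega

private lemma aux_final (p t u w : ℕ) (hp : 2 ≤ p) (ht : 2 ≤ t) (hw : w ≤ u) (hd : 4 ≤ t + u) :
    (t+u)^p + ((t+w)^p + (t^p + t*2^p)) < ((t+u)+(1+t))^p + (w^p + (1 + t*1^p)) := by
  have hmain := aux_main p t u hp ht hd
  have hshift := aux_L1 p t w u hw
  have hb : ((t+u)+(1+t))^p = ((t+u)+(t+1))^p := by ring_nf
  have hc : (t+w)^p = (w+t)^p := by ring_nf
  have hd2 : (t+u)^p = (u+t)^p := by ring_nf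
  rw [hb, hc, one_pow, hd2]
  rw [hd2] at hmain
  omega


/-- pendent spindle operation. -/
theorem pendentSpindle_op (p s ℓ t : ℕ) (hp : 2 ≤ p) (hl : 5 ≤ ℓ) (ht : 2 ≤ t)
    {V : Type*} [Fintype V] (C : SimpleGraph V) (hconn : C.Connected)
    (hfree : Free (broomG ℓ s) C) (v x z : V) (y : Fin t → V)
    (hmax : ∀ w, degp C w ≤ degp C v) (hdegv : ℓ + s - 1 ≤ degp C v)
    (hxv : x ≠ v) (hzv : z ≠ v) (hzx : z ≠ x)
    (hyv : ∀ k, y k ≠ v) (hyx : ∀ k, y k ≠ x) (hyz : ∀ k, y k ≠ z)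
    (hyinj : Function.Injective y)
    (hxy : ∀ k, C.Adj x (y k)) (hzy : ∀ k, C.Adj z (y k))
    (hpz : ∀ w, C.Adj w z → ∃ k, w = y k)
    (hpy : ∀ k w, C.Adj w (y k) → w = x ∨ w = z)
    (C' : SimpleGraph V)
    (hC' : C' = C.deleteEdges {e | ∃ k, e = s(x, y k) ∨ e = s(z, y k)}
        ⊔ SimpleGraph.fromEdgeSet ({s(v, z)} ∪ {e | ∃ k, e = s(v, y k)})) :
    Free (broomG ℓ s) C' ∧ (∀ w, degp C' w ≤ degp C' v) ∧
      ℓ + s - 1 ≤ degp C' v ∧ ep p C < ep p C' := by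
  classical
  have hadj : ∀ a b : V, C'.Adj a b ↔
      (C.Adj a b ∧ ¬ ∃ k, (a = x ∧ b = y k ∨ a = y k ∧ b = x) ∨ (a = z ∧ b = y k ∨ a = y k ∧ b = z))
      ∨ ((a = v ∧ b = z ∨ a = z ∧ b = v) ∨ ∃ k, a = v ∧ b = y k ∨ a = y k ∧ b = v) := by
    intro a b
    rw [hC']
    simp only [SimpleGraph.sup_adj, SimpleGraph.deleteEdges_adj, SimpleGraph.fromEdgeSet_adj,
      Set.mem_union, Set.mem_setOf_eq, Set.mem_singleton_iff, Sym2.eq_iff]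
    constructor
    · rintro (h | ⟨h, -⟩)
      · exact Or.inl h
      · exact Or.inr h
    · rintro (h | h)
      · exact Or.inl h
      · refine Or.inr ⟨h, ?_⟩
        rcases h with (⟨rfl, rfl⟩ | ⟨rfl, rfl⟩) | ⟨k, (⟨rfl, rfl⟩ | ⟨rfl, rfl⟩)⟩
        exacts [fun hh => hzv hh.symm, hzv, fun hh => (hyv k) hh.symm, hyv k]
  -- neighbourhoods in C
  have hNCz : C.neighborSet z = Set.range y := by
    ext b
    simp only [SimpleGraph.mem_neighborSet, Set.mem_range]
    constructor
    · intro h; obtain ⟨k, hk⟩ := hpz b h.symm; exact ⟨k, hk.symm⟩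
    · rintro ⟨k, rfl⟩; exact hzy k
  have hNCy : ∀ k, C.neighborSet (y k) = {x, z} := by
    intro k; ext b
    simp only [SimpleGraph.mem_neighborSet, Set.mem_insert_iff, Set.mem_singleton_iff]
    constructor
    · intro h; exact hpy k b h.symm
    · rintro (rfl | rfl)
      · exact (hxy k).symm
      · exact (hzy k).symm
  have hvz : ¬ C.Adj v z := fun h => by
    obtain ⟨k, hk⟩ := hpz v h; exact hyv k hk.symm
  have hvy : ∀ k, ¬ C.Adj v (y k) := fun k h => by
    rcases hpy k v h with h' | h'
    · exact hxv h'.symm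
    · exact hzv h'.symm
  have hrange : (Set.range y).ncard = t := by
    rw [← Set.image_univ, Set.ncard_image_of_injective _ hyinj, Set.ncard_univ]
    simp
  have hdz : degp C z = t := by rw [degp, hNCz, hrange]
  have hdy : ∀ k, degp C (y k) = 2 := fun k => by
    rw [degp, hNCy k]
    exact Set.ncard_pair (fun h => hzx h.symm)
  have hyNx : Set.range y ⊆ C.neighborSet x := by rintro _ ⟨k, rfl⟩; exact hxy k
  have htdx : t ≤ degp C x := by
    rw [← hrange]; exact Set.ncard_le_ncard hyNx (Set.toFinite _)
  -- neighbourhoods in C'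
  have hNz' : C'.neighborSet z = {v} := by
    ext b
    simp only [SimpleGraph.mem_neighborSet, Set.mem_singleton_iff]
    rw [hadj]
    constructor
    · rintro (⟨hab, hn⟩ | h)
      · exfalso
        obtain ⟨k, hk⟩ := hpz b hab.symm
        exact hn ⟨k, Or.inr (Or.inl ⟨rfl, hk⟩)⟩
      · rcases h with (⟨hzv', -⟩ | ⟨-, rfl⟩) | ⟨k, (⟨hzv', -⟩ | ⟨hzy', -⟩)⟩
        · exact absurd hzv' hzv
        · rfl
        · exact absurd hzv' hzv
        · exact absurd hzy' (fun h => hyz k h.symm)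
    · rintro rfl
      exact Or.inr (Or.inl (Or.inr ⟨rfl, rfl⟩))
  have hNy' : ∀ k0, C'.neighborSet (y k0) = {v} := by
    intro k0; ext b
    simp only [SimpleGraph.mem_neighborSet, Set.mem_singleton_iff]
    rw [hadj]
    constructor
    · rintro (⟨hab, hn⟩ | h)
      · exfalso
        rcases hpy k0 b hab.symm with rfl | rfl
        · exact hn ⟨k0, Or.inl (Or.inr ⟨rfl, rfl⟩)⟩
        · exact hn ⟨k0, Or.inr (Or.inr ⟨rfl, rfl⟩)⟩
      · rcases h with (⟨hyv', -⟩ | ⟨hyz', -⟩) | ⟨k, (⟨hyv', -⟩ | ⟨-, rfl⟩)⟩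
        · exact absurd hyv' (hyv k0)
        · exact absurd hyz' (hyz k0)
        · exact absurd hyv' (hyv k0)
        · rfl
    · rintro rfl
      exact Or.inr (Or.inr ⟨k0, Or.inr ⟨rfl, rfl⟩⟩)
  have hNv' : C'.neighborSet v = C.neighborSet v ∪ insert z (Set.range y) := by
    ext b
    simp only [SimpleGraph.mem_neighborSet, Set.mem_union, Set.mem_insert_iff, Set.mem_range]
    rw [hadj]
    constructor
    · rintro (⟨hab, -⟩ | h)
      · exact Or.inl hab
      · rcases h with (⟨-, rfl⟩ | ⟨hv', -⟩) | ⟨k, (⟨-, rfl⟩ | ⟨hv', -⟩)⟩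
        · exact Or.inr (Or.inl rfl)
        · exact absurd hv'.symm hzv
        · exact Or.inr (Or.inr ⟨k, rfl⟩)
        · exact absurd hv'.symm (hyv k)
    · rintro (h | rfl | ⟨k, rfl⟩)
      · refine Or.inl ⟨h, ?_⟩
        rintro ⟨k, (⟨hv', -⟩ | ⟨hv', -⟩) | (⟨hv', -⟩ | ⟨hv', -⟩)⟩
        · exact hxv hv'.symm
        · exact hyv k hv'.symm
        · exact hzv hv'.symm
        · exact hyv k hv'.symm
      · exact Or.inr (Or.inl (Or.inl ⟨rfl, rfl⟩))
      · exact Or.inr (Or.inr ⟨k, Or.inl ⟨rfl, rfl⟩⟩)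
  have hNx' : C'.neighborSet x = C.neighborSet x \ Set.range y := by
    ext b
    simp only [SimpleGraph.mem_neighborSet, Set.mem_diff, Set.mem_range]
    rw [hadj]
    constructor
    · rintro (⟨hab, hn⟩ | h)
      · refine ⟨hab, ?_⟩
        rintro ⟨k, rfl⟩
        exact hn ⟨k, Or.inl (Or.inl ⟨rfl, rfl⟩)⟩
      · exfalso
        rcases h with (⟨hv', -⟩ | ⟨hv', -⟩) | ⟨k, (⟨hv', -⟩ | ⟨hv', -⟩)⟩
        · exact hxv hv'
        · exact hzx hv'.symm
        · exact hxv hv'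
        · exact hyx k hv'.symm
    · rintro ⟨h, hb⟩
      refine Or.inl ⟨h, ?_⟩
      rintro ⟨k, (⟨-, rfl⟩ | ⟨hv', -⟩) | (⟨hv', -⟩ | ⟨hv', -⟩)⟩
      · exact hb ⟨k, rfl⟩
      · exact hyx k hv'.symm
      · exact hzx hv'.symm
      · exact hyx k hv'.symm
  have hNw' : ∀ w, w ≠ v → w ≠ x → w ≠ z → (∀ k, w ≠ y k) →
      C'.neighborSet w = C.neighborSet w := by
    intro w hwv hwx hwz hwy
    ext b
    simp only [SimpleGraph.mem_neighborSet]
    rw [hadj]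
    constructor
    · rintro (⟨hab, -⟩ | h)
      · exact hab
      · exfalso
        rcases h with (⟨hv', -⟩ | ⟨hv', -⟩) | ⟨k, (⟨hv', -⟩ | ⟨hv', -⟩)⟩
        · exact hwv hv'
        · exact hwz hv'
        · exact hwv hv'
        · exact hwy k hv'
    · intro h
      refine Or.inl ⟨h, ?_⟩
      rintro ⟨k, (⟨hv', -⟩ | ⟨hv', -⟩) | (⟨hv', -⟩ | ⟨hv', -⟩)⟩
      · exact hwx hv'
      · exact hwy k hv'
      · exact hwz hv'
      · exact hwy k hv'
  -- degrees in C'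
  have hzry : z ∉ Set.range y := by rintro ⟨k, hk⟩; exact hyz k hk
  have hins : (insert z (Set.range y)).ncard = t + 1 := by
    rw [Set.ncard_insert_of_notMem hzry (Set.toFinite _), hrange]
  have hdisj : Disjoint (C.neighborSet v) (insert z (Set.range y)) := by
    rw [Set.disjoint_left]
    rintro b hb (rfl | ⟨k, rfl⟩)
    · exact hvz hb
    · exact hvy k hb
  have hdv' : degp C' v = degp C v + (t + 1) := by
    rw [degp, hNv', Set.ncard_union_eq hdisj (Set.toFinite _) (Set.toFinite _), hins, degp]
  have hdx' : degp C' x = degp C x - t := by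
    rw [degp, hNx', Set.ncard_diff hyNx (Set.toFinite _), hrange, degp]
  have hdz' : degp C' z = 1 := by rw [degp, hNz', Set.ncard_singleton]
  have hdy' : ∀ k, degp C' (y k) = 1 := fun k => by rw [degp, hNy' k, Set.ncard_singleton]
  have hdw' : ∀ w, w ≠ v → w ≠ x → w ≠ z → (∀ k, w ≠ y k) → degp C' w = degp C w := by
    intro w h1 h2 h3 h4; rw [degp, hNw' w h1 h2 h3 h4, degp]
  have htd : t ≤ degp C v := hdz ▸ hmax z
  have hd4 : 4 ≤ degp C v := by omega
  -- max degree in C'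
  have hmax' : ∀ w, degp C' w ≤ degp C' v := by
    intro w
    rcases eq_or_ne w v with rfl | h1
    · exact le_rfl
    rcases eq_or_ne w x with rfl | h2
    · have := hmax w; omega
    rcases eq_or_ne w z with rfl | h3
    · omega
    by_cases h4 : ∃ k, w = y k
    · obtain ⟨k, rfl⟩ := h4
      have := hdy' k; omega
    · push_neg at h4
      rw [hdw' w h1 h2 h3 h4]
      have := hmax w; omega
  refine ⟨?_, hmax', by omega, ?_⟩
  · -- Free part
    rintro ⟨f, hf⟩
    -- every vertex of the broom has a neighbour
    have hBd : ∀ u : Fin (ℓ+s), ∃ b, (broomG ℓ s).Adj u b := by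
      intro u
      have main : ∃ c : ℕ, c < ℓ + s ∧ c ≠ (u:ℕ) ∧
          ((((u:ℕ)+1 = c ∧ c < ℓ) ∨ ((u:ℕ) = ℓ-2 ∧ ℓ ≤ c)) ∨
            ((c+1 = (u:ℕ) ∧ (u:ℕ) < ℓ) ∨ (c = ℓ-2 ∧ ℓ ≤ (u:ℕ)))) := by
        by_cases hu : (u:ℕ) < ℓ
        · by_cases h0 : (u:ℕ) = 0
          · exact ⟨1, by omega, by omega, Or.inl (Or.inl (by omega))⟩
          · exact ⟨(u:ℕ)-1, by omega, by omega, Or.inr (Or.inl (by omega))⟩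
        · exact ⟨ℓ-2, by omega, by omega, Or.inr (Or.inr (by omega))⟩
      obtain ⟨c, hc, hne, hrel⟩ := main
      refine ⟨⟨c, hc⟩, ?_⟩
      rw [broomG, SimpleGraph.fromRel_adj]
      constructor
      · intro h
        exact hne (congrArg Fin.val h).symm
      · rcases hrel with h | h
        · exact Or.inl h
        · exact Or.inr h
    set S : Set (Fin (ℓ + s)) := {u | f u = z ∨ ∃ k, f u = y k} with hSdef
    have hstep1 : ∀ a ∈ S, ∀ b, (broomG ℓ s).Adj a b → f b = v := by
      intro a ha b hab
      have h' := hf a b hab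
      rcases ha with hz | ⟨k, hk⟩
      · rw [hz] at h'
        have : f b ∈ C'.neighborSet z := h'
        rwa [hNz', Set.mem_singleton_iff] at this
      · rw [hk] at h'
        have : f b ∈ C'.neighborSet (y k) := h'
        rwa [hNy' k, Set.mem_singleton_iff] at this
    have hSnotadj : ∀ a ∈ S, ∀ b ∈ S, ¬ (broomG ℓ s).Adj a b := by
      intro a ha b hb hab
      have hv' := hstep1 a ha b hab
      rcases hb with h | ⟨k, h⟩
      · exact hzv (h.symm.trans hv')
      · exact hyv k (h.symm.trans hv')
    rcases Set.eq_empty_or_nonempty S with hS | hS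
    · -- f itself is a copy in C
      apply hfree
      refine ⟨f, ?_⟩
      intro a b hab
      have haS : ¬ (f a = z ∨ ∃ k, f a = y k) := by
        intro h; exact (Set.eq_empty_iff_forall_notMem.mp hS a) h
      have hbS : ¬ (f b = z ∨ ∃ k, f b = y k) := by
        intro h; exact (Set.eq_empty_iff_forall_notMem.mp hS b) h
      push_neg at haS hbS
      have h' := hf a b hab
      rw [hadj] at h'
      rcases h' with ⟨hc, -⟩ | h'
      · exact hc
      · exfalso
        rcases h' with (⟨-, h2⟩ | ⟨h1, -⟩) | ⟨k, (⟨-, h2⟩ | ⟨h1, -⟩)⟩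
        · exact hbS.1 h2
        · exact haS.1 h1
        · exact hbS.2 k h2
        · exact haS.2 k h1
    · -- S nonempty : repair the copy
      obtain ⟨u0, hu0⟩ := hS
      obtain ⟨b0, hb0⟩ := hBd u0
      have hfb0 : f b0 = v := hstep1 u0 hu0 b0 hb0
      have hb0S : b0 ∉ S := fun h => hSnotadj u0 hu0 b0 h hb0
      set N : Set V := C.neighborSet v with hNdef
      set A : Set V := f '' Sᶜ with hAdef
      have hvA : v ∈ A := ⟨b0, hb0S, hfb0⟩
      have hAcard : A.ncard + S.ncard = ℓ + s := by
        rw [hAdef, Set.ncard_image_of_injective _ f.injective]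
        have h1 := Set.ncard_add_ncard_compl S
        have h2 : Nat.card (Fin (ℓ+s)) = ℓ + s := by simp
        omega
      have hvN : v ∉ N := fun h => C.irrefl h
      have hA1 : 1 ≤ A.ncard := by
        rw [← Set.ncard_singleton v]
        exact Set.ncard_le_ncard (Set.singleton_subset_iff.mpr hvA) (Set.toFinite _)
      have hAv : (A \ {v}).ncard + 1 = A.ncard := by
        rw [Set.ncard_diff (Set.singleton_subset_iff.mpr hvA) (Set.toFinite _),
          Set.ncard_singleton]
        omega
      have hTgt : N \ A = N \ (A \ {v}) := by
        ext w
        constructor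
        · rintro ⟨h, hh⟩; exact ⟨h, fun hha => hh hha.1⟩
        · rintro ⟨h, hh⟩
          exact ⟨h, fun ha => hh ⟨ha, fun hv2 => hvN (Set.mem_singleton_iff.mp hv2 ▸ h)⟩⟩
      have hsub2 : N ⊆ (N \ (A \ {v})) ∪ (A \ {v}) := by
        intro w hw
        by_cases hwa : w ∈ A \ {v}
        · exact Or.inr hwa
        · exact Or.inl ⟨hw, hwa⟩
      have hcount : N.ncard ≤ (N \ A).ncard + (A \ {v}).ncard := by
        rw [hTgt]
        calc N.ncard ≤ ((N \ (A \ {v})) ∪ (A \ {v})).ncard :=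
              Set.ncard_le_ncard hsub2 (Set.toFinite _)
        _ ≤ (N \ (A \ {v})).ncard + (A \ {v}).ncard := Set.ncard_union_le _ _
      have hNcard : ℓ + s - 1 ≤ N.ncard := hdegv
      have hls : 5 ≤ ℓ + s := by omega
      have hcard : S.ncard ≤ (N \ A).ncard := by omega
      have hemb : Nonempty (S ↪ ↥(N \ A)) := by
        apply Function.Embedding.nonempty_of_card_le
        rw [← Nat.card_eq_fintype_card, ← Nat.card_eq_fintype_card,
          Nat.card_coe_set_eq, Nat.card_coe_set_eq]
        exact hcard
      obtain ⟨hemb'⟩ := hemb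
      set g : Fin (ℓ + s) → V := fun u => if hu : u ∈ S then (hemb' ⟨u, hu⟩ : V) else f u with hgdef
      have hgS : ∀ u (hu : u ∈ S), g u = (hemb' ⟨u, hu⟩ : V) := fun u hu => dif_pos hu
      have hgnS : ∀ u, u ∉ S → g u = f u := fun u hu => dif_neg hu
      have hginN : ∀ u (hu : u ∈ S), g u ∈ N ∧ g u ∉ A := by
        intro u hu
        rw [hgS u hu]
        exact ⟨(hemb' ⟨u, hu⟩).2.1, (hemb' ⟨u, hu⟩).2.2⟩
      have hginj : Function.Injective g := by
        intro a b hab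
        by_cases haS : a ∈ S <;> by_cases hbS : b ∈ S
        · rw [hgS a haS, hgS b hbS] at hab
          have := hemb'.injective (Subtype.coe_injective hab)
          exact congrArg Subtype.val this
        · exfalso
          have hfb : f b = g a := by rw [← hgnS b hbS]; exact hab.symm
          exact (hginN a haS).2 ⟨b, hbS, hfb⟩
        · exfalso
          have hfa : f a = g b := by rw [← hgnS a haS]; exact hab
          exact (hginN b hbS).2 ⟨a, haS, hfa⟩
        · rw [hgnS a haS, hgnS b hbS] at hab
          exact f.injective hab
      apply hfree
      refine ⟨⟨g, hginj⟩, ?_⟩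
      intro a b hab
      simp only [Function.Embedding.coeFn_mk]
      by_cases haS : a ∈ S <;> by_cases hbS : b ∈ S
      · exact absurd hab (hSnotadj a haS b hbS)
      · have hfb : f b = v := hstep1 a haS b hab
        rw [hgnS b hbS, hfb]
        exact ((hginN a haS).1 : C.Adj v (g a)).symm
      · have hfa : f a = v := hstep1 b hbS a hab.symm
        rw [hgnS a haS, hfa]
        exact ((hginN b hbS).1 : C.Adj v (g b))
      · rw [hgnS a haS, hgnS b hbS]
        have haS' : ¬ (f a = z ∨ ∃ k, f a = y k) := haS
        have hbS' : ¬ (f b = z ∨ ∃ k, f b = y k) := hbS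
        push_neg at haS' hbS'
        have h' := hf a b hab
        rw [hadj] at h'
        rcases h' with ⟨hc, -⟩ | h'
        · exact hc
        · exfalso
          rcases h' with (⟨-, h2⟩ | ⟨h1, -⟩) | ⟨k, (⟨-, h2⟩ | ⟨h1, -⟩)⟩
          · exact hbS'.1 h2
          · exact haS'.1 h1
          · exact hbS'.2 k h2
          · exact haS'.2 k h1
  · -- ep part
    obtain ⟨u0, hu0⟩ : ∃ u0, degp C v = t + u0 := ⟨degp C v - t, by omega⟩
    obtain ⟨w0, hw0⟩ : ∃ w0, degp C x = t + w0 := ⟨degp C x - t, by omega⟩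
    have hw0u0 : w0 ≤ u0 := by have := hmax x; omega
    set T : Finset V := insert v (insert x (insert z (Finset.image y Finset.univ))) with hT
    have hyim : ∀ w, w ∈ Finset.image y Finset.univ ↔ ∃ k, w = y k := by
      intro w; simp only [Finset.mem_image, Finset.mem_univ, true_and]
      constructor
      · rintro ⟨k, rfl⟩; exact ⟨k, rfl⟩
      · rintro ⟨k, rfl⟩; exact ⟨k, rfl⟩
    have hzT : z ∉ insert z (Finset.image y Finset.univ) → False := fun h => h (Finset.mem_insert_self _ _)
    have m1 : z ∉ Finset.image y Finset.univ := by
      rw [hyim]; rintro ⟨k, hk⟩; exact hyz k hk.symm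
    have m2 : x ∉ insert z (Finset.image y Finset.univ) := by
      rw [Finset.mem_insert, hyim]
      rintro (h | ⟨k, hk⟩)
      · exact hzx h.symm
      · exact hyx k hk.symm
    have m3 : v ∉ insert x (insert z (Finset.image y Finset.univ)) := by
      rw [Finset.mem_insert, Finset.mem_insert, hyim]
      rintro (h | h | ⟨k, hk⟩)
      · exact hxv h.symm
      · exact hzv h.symm
      · exact hyv k hk.symm
    have hsplit : ∀ (G : SimpleGraph V),
        ep p G = ∑ w ∈ Finset.univ \ T, degp G w ^ p + ∑ w ∈ T, degp G w ^ p :=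
      fun G => (Finset.sum_sdiff (Finset.subset_univ T)).symm
    have hTs : ∀ (G : SimpleGraph V), ∑ w ∈ T, degp G w ^ p =
        degp G v ^ p + (degp G x ^ p + (degp G z ^ p + ∑ k : Fin t, degp G (y k) ^ p)) := by
      intro G
      rw [hT, Finset.sum_insert m3, Finset.sum_insert m2, Finset.sum_insert m1,
        Finset.sum_image (fun a _ b _ h => hyinj h)]
    have hrest : ∑ w ∈ Finset.univ \ T, degp C' w ^ p = ∑ w ∈ Finset.univ \ T, degp C w ^ p := by
      apply Finset.sum_congr rfl
      intro w hw
      rw [Finset.mem_sdiff, hT, Finset.mem_insert, Finset.mem_insert, Finset.mem_insert, hyim] at hw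
      push_neg at hw
      obtain ⟨-, h1, h2, h3, h4⟩ := hw
      rw [hdw' w h1 h2 h3 h4]
    have hyC : ∑ k : Fin t, degp C (y k) ^ p = t * 2 ^ p := by
      rw [Finset.sum_congr rfl (fun k _ => by rw [hdy k])]
      simp [Finset.sum_const, Finset.card_univ]
    have hyC' : ∑ k : Fin t, degp C' (y k) ^ p = t * 1 ^ p := by
      rw [Finset.sum_congr rfl (fun k _ => by rw [hdy' k])]
      simp [Finset.sum_const, Finset.card_univ]
    have hvpow : degp C' v = (t + u0) + (1 + t) := by omega
    have hxpow : degp C' x = w0 := by omega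
    rw [hsplit C, hsplit C', hrest, hTs C, hTs C', hyC, hyC', hdz, hdz', hvpow, hxpow, hu0, hw0]
    have := aux_final p t u0 w0 hp ht hw0u0 (by omega)
    simp only [one_pow, mul_one] at this ⊢
    omega


end Paper
end

section
/- Let p ≥ 2, s ≥ 0, ℓ ≥ 5. Let C be a connected B_{ℓ,s}-free graph and v ∈ V(C) with d_C(v) = Δ(C) ≥ ℓ + s − 1. Suppose that for some t ≥ 2, C contains an x-pendent spindle⁺ S⁺ = C[{x,z,y_1,…,y_t}] with x,z,y_1,…,y_t ∈ V(C)∖{v}, and let C' be the graph obtained from C by deleting the 2t+1 edges xz and xy_k, zy_k (1 ≤ k ≤ t) and adding the edges vz, vy_1, …, vy_t. Then C' is B_{ℓ,s}-free, d_{C'}(v) = Δ(C') ≥ ℓ + s − 1, and e_p(C) < e_p(C'). -/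
open Finset

namespace Paper

private lemma succ_pow_mono {m n : ℕ} (p : ℕ) (h : m ≤ n) :
    (m + 1) ^ p + n ^ p ≤ m ^ p + (n + 1) ^ p := by
  have hm : (m + 1) ^ p = ∑ k ∈ range (p + 1), m ^ k * p.choose k := by
    simpa using add_pow m 1 p
  have hn : (n + 1) ^ p = ∑ k ∈ range (p + 1), n ^ k * p.choose k := by
    simpa using add_pow n 1 p
  rw [hm, hn, Finset.sum_range_succ, Finset.sum_range_succ, Nat.choose_self]
  have hs : ∑ k ∈ range p, m ^ k * p.choose k ≤ ∑ k ∈ range p, n ^ k * p.choose k :=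
    Finset.sum_le_sum fun k _ => Nat.mul_le_mul_right _ (Nat.pow_le_pow_left h k)
  omega

private lemma shift_mono (p c e : ℕ) : ∀ f, (c + e) ^ p + (e + f) ^ p ≤ (c + e + f) ^ p + e ^ p := by
  intro f
  induction f with
  | zero => simp
  | succ f ih =>
    have h := succ_pow_mono p (show e + f ≤ c + e + f by omega)
    have h1 : e + (f+1) = (e+f) + 1 := by ring
    have h2 : c + e + (f+1) = (c+e+f) + 1 := by ring
    rw [h1, h2]
    omega

private lemma para (n : ℕ) : ∀ b c : ℕ, 2 * (b + c) ^ (n + 2) + 2 * c ^ (n + 2) ≤ (b + 2 * c) ^ (n + 2) + b ^ (n + 2) := by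
  induction n with
  | zero => intro b c; exact le_of_eq (by ring)
  | succ n ih =>
    intro b c
    have h1 : (b + c) * (2 * (b + c) ^ (n + 2) + 2 * c ^ (n + 2)) ≤
        (b + c) * ((b + 2 * c) ^ (n + 2) + b ^ (n + 2)) := Nat.mul_le_mul_left _ (ih b c)
    have h2 : c * b ^ (n + 2) ≤ c * (b + 2 * c) ^ (n + 2) :=
      Nat.mul_le_mul_left _ (Nat.pow_le_pow_left (by omega) _)
    have e1 : (b + c) ^ (n + 3) = (b + c) * (b + c) ^ (n + 2) := by ring
    have e2 : c ^ (n + 3) = c * c ^ (n + 2) := by ring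
    have e3 : (b + 2 * c) ^ (n + 3) = (b + 2 * c) * (b + 2 * c) ^ (n + 2) := by ring
    have e4 : b ^ (n + 3) = b * b ^ (n + 2) := by ring
    rw [e1, e2, e3, e4]
    nlinarith [h1, h2, Nat.zero_le (b * c ^ (n + 2))]

private lemma cb {p c : ℕ} (hp : 2 ≤ p) (hc : 3 ≤ c) : (c - 1) * 2 ^ p + 1 ≤ c ^ p := by
  obtain ⟨q, rfl⟩ : ∃ q, p = q + 2 := ⟨p - 2, by omega⟩
  obtain ⟨d, rfl⟩ : ∃ d, c = d + 3 := ⟨c - 3, by omega⟩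
  have h1 : 2 ^ q ≤ (d + 3) ^ q := Nat.pow_le_pow_left (by omega) _
  have e1 : (d + 3 - 1) * 2 ^ (q + 2) + 1 = (4 * d + 8) * 2 ^ q + 1 := by
    have : d + 3 - 1 = d + 2 := by omega
    rw [this]; ring
  have e2 : (d + 3) ^ (q + 2) = (d * d + 6 * d + 9) * (d + 3) ^ q := by ring
  rw [e1, e2]
  have h2 : (4 * d + 8) * 2 ^ q ≤ (4 * d + 8) * (d + 3) ^ q := Nat.mul_le_mul_left _ h1
  have h3 : 1 ≤ (d + 3) ^ q := Nat.one_le_pow _ _ (by omega)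
  nlinarith [h2, h3]

private lemma key {p a b c : ℕ} (hp : 2 ≤ p) (hc : 3 ≤ c) (hcb : c ≤ b) (hba : b ≤ a) :
    a ^ p + b ^ p + c ^ p + (c - 1) * 2 ^ p < (a + c) ^ p + (b - c) ^ p + c := by
  obtain ⟨q, rfl⟩ : ∃ q, p = q + 2 := ⟨p - 2, by omega⟩
  have F1 : 2 * a ^ (q + 2) + 2 * c ^ (q + 2) ≤ (a + c) ^ (q + 2) + (a - c) ^ (q + 2) := by
    have := para q (a - c) c
    have h1 : a - c + c = a := by omega
    have h2 : a - c + 2 * c = a + c := by omega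
    rwa [h1, h2] at this
  have F2 : b ^ (q + 2) + (a - c) ^ (q + 2) ≤ a ^ (q + 2) + (b - c) ^ (q + 2) := by
    have := shift_mono (q + 2) c (b - c) (a - b)
    have h1 : c + (b - c) = b := by omega
    have h2 : b - c + (a - b) = a - c := by omega
    have h3 : c + (b - c) + (a - b) = a := by omega
    rw [h1, h2] at this
    have h4 : b + (a - b) = a := by omega
    rwa [h4] at this
  have F3 : (c - 1) * 2 ^ (q + 2) + 1 ≤ c ^ (q + 2) := cb (by omega) hc
  omega


private lemma broom_nbr {ℓ s : ℕ} (hl : 5 ≤ ℓ) (i : Fin (ℓ + s)) :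
    ∃ j, (broomG ℓ s).Adj i j := by
  by_cases h : (i : ℕ) < ℓ
  · by_cases h0 : (i : ℕ) = 0
    · refine ⟨⟨1, by omega⟩, ?_⟩
      rw [broomG, SimpleGraph.fromRel_adj]
      refine ⟨?_, Or.inl (Or.inl ⟨by simp [h0], by simp; omega⟩)⟩
      intro hc; apply_fun (Fin.val) at hc; simp [h0] at hc
    · refine ⟨⟨(i : ℕ) - 1, by omega⟩, ?_⟩
      rw [broomG, SimpleGraph.fromRel_adj]
      refine ⟨?_, Or.inr (Or.inl ⟨by simp; omega, by simpa using h⟩)⟩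
      intro hc; apply_fun (Fin.val) at hc; simp at hc; omega
  · refine ⟨⟨ℓ - 2, by omega⟩, ?_⟩
    rw [broomG, SimpleGraph.fromRel_adj]
    refine ⟨?_, Or.inr (Or.inr ⟨by simp, by omega⟩)⟩
    intro hc; apply_fun (Fin.val) at hc; simp at hc; omega



/-- pendent spindle⁺ operation. -/
theorem pendentSpindlePlus_op (p s ℓ t : ℕ) (hp : 2 ≤ p) (hl : 5 ≤ ℓ) (ht : 2 ≤ t)
    {V : Type*} [Fintype V] (C : SimpleGraph V) (hconn : C.Connected)
    (hfree : Free (broomG ℓ s) C) (v x z : V) (y : Fin t → V)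
    (hmax : ∀ w, degp C w ≤ degp C v) (hdegv : ℓ + s - 1 ≤ degp C v)
    (hxv : x ≠ v) (hzv : z ≠ v)
    (hyv : ∀ k, y k ≠ v) (hyx : ∀ k, y k ≠ x) (hyz : ∀ k, y k ≠ z)
    (hyinj : Function.Injective y)
    (hxz : C.Adj x z) (hxy : ∀ k, C.Adj x (y k)) (hzy : ∀ k, C.Adj z (y k))
    (hpz : ∀ w, C.Adj w z → w = x ∨ ∃ k, w = y k)
    (hpy : ∀ k w, C.Adj w (y k) → w = x ∨ w = z)
    (C' : SimpleGraph V)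
    (hC' : C' = C.deleteEdges ({s(x, z)} ∪ {e | ∃ k, e = s(x, y k) ∨ e = s(z, y k)})
        ⊔ SimpleGraph.fromEdgeSet ({s(v, z)} ∪ {e | ∃ k, e = s(v, y k)})) :
    Free (broomG ℓ s) C' ∧ (∀ w, degp C' w ≤ degp C' v) ∧
      ℓ + s - 1 ≤ degp C' v ∧ ep p C < ep p C' := by
  classical
  subst hC'
  set D : Set (Sym2 V) := {s(x, z)} ∪ {e | ∃ k, e = s(x, y k) ∨ e = s(z, y k)} with hD
  set A : Set (Sym2 V) := {s(v, z)} ∪ {e | ∃ k, e = s(v, y k)} with hA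
  set C' : SimpleGraph V := C.deleteEdges D ⊔ SimpleGraph.fromEdgeSet A with hC'
  have hxz' : x ≠ z := hxz.ne
  have hvz : ¬ C.Adj v z := by
    intro h
    rcases hpz v h with h' | ⟨k, h'⟩
    · exact hxv h'.symm
    · exact hyv k h'.symm
  have hvy : ∀ k, ¬ C.Adj v (y k) := by
    intro k h
    rcases hpy k v h with h' | h'
    · exact hxv h'.symm
    · exact hzv h'.symm
  have hCadj : ∀ a b : V, C'.Adj a b ↔
      (C.Adj a b ∧ ¬ (s(a, b) = s(x, z) ∨ ∃ k, s(a, b) = s(x, y k) ∨ s(a, b) = s(z, y k)))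
      ∨ ((s(a, b) = s(v, z) ∨ ∃ k, s(a, b) = s(v, y k)) ∧ a ≠ b) := by
    intro a b
    rw [hC']
    simp [SimpleGraph.sup_adj, SimpleGraph.deleteEdges_adj, SimpleGraph.fromEdgeSet_adj, hD, hA,
      Set.mem_union, Set.mem_setOf_eq]
  -- adjacency characterizations
  have h1 : ∀ u, C'.Adj v u ↔ (C.Adj v u ∨ u = z ∨ ∃ k, u = y k) := by
    intro u
    rw [hCadj]
    constructor
    · rintro (⟨h, -⟩ | ⟨(h | ⟨k, h⟩), hne⟩)
      · exact Or.inl h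
      · rw [Sym2.eq_iff] at h
        rcases h with ⟨-, rfl⟩ | ⟨h, -⟩
        · exact Or.inr (Or.inl rfl)
        · exact absurd h.symm hzv
      · rw [Sym2.eq_iff] at h
        rcases h with ⟨-, rfl⟩ | ⟨h, -⟩
        · exact Or.inr (Or.inr ⟨k, rfl⟩)
        · exact absurd h.symm (hyv k)
    · rintro (h | rfl | ⟨k, rfl⟩)
      · left
        refine ⟨h, ?_⟩
        rintro (he | ⟨k, he | he⟩) <;> rw [Sym2.eq_iff] at he <;>
          rcases he with ⟨h1, h2⟩ | ⟨h1, h2⟩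
        · exact hxv h1.symm
        · exact hzv h1.symm
        · exact hxv h1.symm
        · exact hyv k h1.symm
        · exact hzv h1.symm
        · exact hyv k h1.symm
      · exact Or.inr ⟨Or.inl rfl, fun e => hzv e.symm⟩
      · exact Or.inr ⟨Or.inr ⟨k, rfl⟩, fun e => hyv k e.symm⟩
  have h2 : ∀ u, C'.Adj x u ↔ (C.Adj x u ∧ ¬ (u = z ∨ ∃ k, u = y k)) := by
    intro u
    rw [hCadj]
    constructor
    · rintro (⟨h, hnd⟩ | ⟨(h | ⟨k, h⟩), -⟩)
      · refine ⟨h, ?_⟩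
        rintro (rfl | ⟨k, rfl⟩)
        · exact hnd (Or.inl rfl)
        · exact hnd (Or.inr ⟨k, Or.inl rfl⟩)
      · rw [Sym2.eq_iff] at h
        rcases h with ⟨h1, -⟩ | ⟨h1, -⟩
        · exact absurd h1 hxv
        · exact absurd h1 hxz'
      · rw [Sym2.eq_iff] at h
        rcases h with ⟨h1, -⟩ | ⟨h1, -⟩
        · exact absurd h1 hxv
        · exact absurd h1.symm (hyx k)
    · rintro ⟨h, hu⟩
      left
      refine ⟨h, ?_⟩
      rintro (he | ⟨k, he | he⟩) <;> rw [Sym2.eq_iff] at he <;>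
        rcases he with ⟨h1, h2⟩ | ⟨h1, h2⟩ <;>
        first
          | exact hu (Or.inl h2)
          | exact hu (Or.inr ⟨k, h2⟩)
          | exact hxz' h1
          | exact hxz' h1.symm
          | exact hyx k h1.symm
  have h3 : ∀ u, C'.Adj z u ↔ u = v := by
    intro u
    rw [hCadj]
    constructor
    · rintro (⟨h, hnd⟩ | ⟨(h | ⟨k, h⟩), -⟩)
      · exfalso
        rcases hpz u h.symm with rfl | ⟨k, rfl⟩
        · exact hnd (Or.inl (by rw [Sym2.eq_iff]; tauto))
        · exact hnd (Or.inr ⟨k, Or.inr (by rw [Sym2.eq_iff]; tauto)⟩)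
      · rw [Sym2.eq_iff] at h
        rcases h with ⟨h1, -⟩ | ⟨-, h2⟩
        · exact absurd h1 hzv
        · exact h2
      · rw [Sym2.eq_iff] at h
        rcases h with ⟨h1, -⟩ | ⟨h1, -⟩
        · exact absurd h1 hzv
        · exact absurd h1.symm (hyz k)
    · rintro rfl
      exact Or.inr ⟨Or.inl (by rw [Sym2.eq_iff]; tauto), hzv⟩
  have h4 : ∀ k u, C'.Adj (y k) u ↔ u = v := by
    intro k u
    rw [hCadj]
    constructor
    · rintro (⟨h, hnd⟩ | ⟨(h | ⟨k', h⟩), -⟩)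
      · exfalso
        rcases hpy k u h.symm with rfl | rfl
        · exact hnd (Or.inr ⟨k, Or.inl (by rw [Sym2.eq_iff]; tauto)⟩)
        · exact hnd (Or.inr ⟨k, Or.inr (by rw [Sym2.eq_iff]; tauto)⟩)
      · rw [Sym2.eq_iff] at h
        rcases h with ⟨h1, -⟩ | ⟨h1, h2⟩
        · exact absurd h1 (hyv k)
        · exact absurd h1 (hyz k)
      · rw [Sym2.eq_iff] at h
        rcases h with ⟨h1, -⟩ | ⟨-, h2⟩
        · exact absurd h1 (hyv k)
        · exact h2
    · rintro rfl
      exact Or.inr ⟨Or.inr ⟨k, by rw [Sym2.eq_iff]; tauto⟩, hyv k⟩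
  have h5 : ∀ w u, w ≠ v → w ≠ x → w ≠ z → (∀ k, w ≠ y k) → (C'.Adj w u ↔ C.Adj w u) := by
    intro w u hwv hwx hwz hwy
    rw [hCadj]
    constructor
    · rintro (⟨h, -⟩ | ⟨(h | ⟨k, h⟩), -⟩)
      · exact h
      · rw [Sym2.eq_iff] at h
        rcases h with ⟨h1, -⟩ | ⟨h1, -⟩
        · exact absurd h1 hwv
        · exact absurd h1 hwz
      · rw [Sym2.eq_iff] at h
        rcases h with ⟨h1, -⟩ | ⟨h1, -⟩
        · exact absurd h1 hwv
        · exact absurd h1 (hwy k)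
    · intro h
      left
      refine ⟨h, ?_⟩
      rintro (he | ⟨k, he | he⟩) <;> rw [Sym2.eq_iff] at he <;>
        rcases he with ⟨e1, e2⟩ | ⟨e1, e2⟩
      · exact hwx e1
      · exact hwz e1
      · exact hwx e1
      · exact hwy k e1
      · exact hwz e1
      · exact hwy k e1
  -- neighbor sets
  have hNv' : C'.neighborSet v = C.neighborSet v ∪ ({z} ∪ Set.range y) := by
    ext u
    simp only [SimpleGraph.mem_neighborSet, Set.mem_union, Set.mem_singleton_iff,
      Set.mem_range, h1 u]
    tauto
  have hNx' : C'.neighborSet x = C.neighborSet x \ ({z} ∪ Set.range y) := by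
    ext u
    simp only [SimpleGraph.mem_neighborSet, Set.mem_diff, Set.mem_union, Set.mem_singleton_iff,
      Set.mem_range, h2 u]
    tauto
  have hNz' : C'.neighborSet z = {v} := by
    ext u
    simp only [SimpleGraph.mem_neighborSet, Set.mem_singleton_iff, h3 u]
  have hNy' : ∀ k, C'.neighborSet (y k) = {v} := by
    intro k
    ext u
    simp only [SimpleGraph.mem_neighborSet, Set.mem_singleton_iff, h4 k u]
  have hNw' : ∀ w, w ≠ v → w ≠ x → w ≠ z → (∀ k, w ≠ y k) →
      C'.neighborSet w = C.neighborSet w := by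
    intro w hwv hwx hwz hwy
    ext u
    simp only [SimpleGraph.mem_neighborSet, h5 w u hwv hwx hwz hwy]
  have hNzC : C.neighborSet z = {x} ∪ Set.range y := by
    ext u
    simp only [SimpleGraph.mem_neighborSet, Set.mem_union, Set.mem_singleton_iff, Set.mem_range]
    constructor
    · intro h
      rcases hpz u h.symm with h' | ⟨k, h'⟩
      · exact Or.inl h'
      · exact Or.inr ⟨k, h'.symm⟩
    · rintro (rfl | ⟨k, rfl⟩)
      · exact hxz.symm
      · exact hzy k
  have hNyC : ∀ k, C.neighborSet (y k) = {x, z} := by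
    intro k
    ext u
    simp only [SimpleGraph.mem_neighborSet, Set.mem_insert_iff, Set.mem_singleton_iff]
    constructor
    · intro h
      exact hpy k u h.symm
    · rintro (rfl | rfl)
      · exact (hxy k).symm
      · exact (hzy k).symm
  have hsubx : ({z} ∪ Set.range y : Set V) ⊆ C.neighborSet x := by
    rintro u (rfl | ⟨k, rfl⟩)
    · exact hxz
    · exact hxy k
  -- cardinalities
  have hrange : (Set.range y).ncard = t := by
    rw [← Nat.card_coe_set_eq, Nat.card_range_of_injective hyinj,
      Nat.card_eq_fintype_card, Fintype.card_fin]
  have hScard : ({z} ∪ Set.range y : Set V).ncard = t + 1 := by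
    rw [Set.ncard_union_eq (Set.disjoint_singleton_left.mpr (by
      rintro ⟨k, hk⟩; exact hyz k hk)), Set.ncard_singleton, hrange]
    omega
  have hdisj : Disjoint (C.neighborSet v) ({z} ∪ Set.range y : Set V) := by
    rw [Set.disjoint_left]
    rintro u hu (rfl | ⟨k, rfl⟩)
    · exact hvz hu
    · exact hvy k hu
  have dv' : degp C' v = degp C v + (t + 1) := by
    rw [degp, hNv', Set.ncard_union_eq hdisj, hScard, degp]
  have dx' : degp C' x = degp C x - (t + 1) := by
    rw [degp, hNx', Set.ncard_diff hsubx, hScard, degp]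
  have dz' : degp C' z = 1 := by rw [degp, hNz', Set.ncard_singleton]
  have dy' : ∀ k, degp C' (y k) = 1 := by
    intro k; rw [degp, hNy' k, Set.ncard_singleton]
  have dw' : ∀ w, w ≠ v → w ≠ x → w ≠ z → (∀ k, w ≠ y k) → degp C' w = degp C w := by
    intro w hwv hwx hwz hwy; rw [degp, hNw' w hwv hwx hwz hwy, degp]
  have dzC : degp C z = t + 1 := by
    rw [degp, hNzC, Set.ncard_union_eq (Set.disjoint_singleton_left.mpr (by
      rintro ⟨k, hk⟩; exact hyx k hk)), Set.ncard_singleton, hrange]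
    omega
  have dyC : ∀ k, degp C (y k) = 2 := by
    intro k; rw [degp, hNyC k, Set.ncard_pair hxz']
  have dxC_ge : t + 1 ≤ degp C x := by
    have h := Set.ncard_le_ncard hsubx (Set.toFinite _)
    rwa [hScard] at h
  -- max degree and degree of v in C'
  have hmax' : ∀ w, degp C' w ≤ degp C' v := by
    intro w
    by_cases hwv : w = v
    · subst hwv; exact le_refl _
    by_cases hwx : w = x
    · rw [hwx, dx', dv']
      have := hmax x
      omega
    by_cases hwz : w = z
    · rw [hwz, dz', dv']
      omega
    by_cases hwy : ∃ k, w = y k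
    · obtain ⟨k, rfl⟩ := hwy
      rw [dy' k, dv']
      omega
    · push_neg at hwy
      rw [dw' w hwv hwx hwz hwy, dv']
      have := hmax w
      omega
  have hdeg' : ℓ + s - 1 ≤ degp C' v := by
    rw [dv']
    omega
  -- sum manipulation
  set Q : Finset V := insert v (insert x (insert z (Finset.image y Finset.univ))) with hQ
  have hvQ : v ∉ insert x (insert z (Finset.image y Finset.univ)) := by
    simp only [Finset.mem_insert, Finset.mem_image, Finset.mem_univ, true_and]
    rintro (h | h | ⟨k, hk⟩)
    · exact hxv h.symm
    · exact hzv h.symm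
    · exact hyv k hk
  have hxQ : x ∉ insert z (Finset.image y Finset.univ) := by
    simp only [Finset.mem_insert, Finset.mem_image, Finset.mem_univ, true_and]
    rintro (h | ⟨k, hk⟩)
    · exact hxz' h
    · exact hyx k hk
  have hzQ : z ∉ Finset.image y Finset.univ := by
    simp only [Finset.mem_image, Finset.mem_univ, true_and]
    rintro ⟨k, hk⟩
    exact hyz k hk
  have hsum_y : ∀ g : V → ℕ, ∑ u ∈ Finset.image y Finset.univ, g u = ∑ k, g (y k) :=
    fun g => Finset.sum_image (fun a _ b _ h => hyinj h)
  have hQsum : ∀ g : V → ℕ, ∑ u ∈ Q, g u = g v + g x + g z + ∑ k, g (y k) := by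
    intro g
    rw [hQ, Finset.sum_insert hvQ, Finset.sum_insert hxQ, Finset.sum_insert hzQ, hsum_y]
    ring
  have hepsplit : ∀ G : SimpleGraph V,
      ep p G = ∑ u ∈ Finset.univ \ Q, degp G u ^ p + ∑ u ∈ Q, degp G u ^ p := by
    intro G
    rw [ep, ← Finset.sum_sdiff (Finset.subset_univ Q)]
  have hoff : ∀ u ∈ Finset.univ \ Q, degp C' u ^ p = degp C u ^ p := by
    intro u hu
    rw [Finset.mem_sdiff, hQ] at hu
    obtain ⟨-, hu⟩ := hu
    simp only [Finset.mem_insert, Finset.mem_image, Finset.mem_univ, true_and] at hu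
    push_neg at hu
    obtain ⟨hu1, hu2, hu3, hu4⟩ := hu
    rw [dw' u hu1 hu2 hu3 (fun k hk => hu4 k hk.symm)]
  have key_ineq : degp C v ^ p + degp C x ^ p + (t + 1) ^ p + t * 2 ^ p
      < (degp C v + (t + 1)) ^ p + (degp C x - (t + 1)) ^ p + (t + 1) := by
    have h := key (p := p) (a := degp C v) (b := degp C x) (c := t + 1) hp (by omega)
      dxC_ge (hmax x)
    simpa using h
  have hepC : ep p C < ep p C' := by
    rw [hepsplit C, hepsplit C', Finset.sum_congr rfl hoff, hQsum, hQsum]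
    have e1 : ∑ k, degp C (y k) ^ p = t * 2 ^ p := by
      rw [Finset.sum_congr rfl (fun k _ => by rw [dyC k])]
      simp [Finset.card_univ, mul_comm]
    have e2 : ∑ k : Fin t, degp C' (y k) ^ p = t := by
      rw [Finset.sum_congr rfl (fun k _ => by rw [dy' k, one_pow])]
      simp
    rw [e1, e2, dv', dx', dz', dzC, one_pow]
    have := key_ineq
    omega
  -- freeness of C'
  have hfree' : Free (broomG ℓ s) C' := by
    rintro ⟨f, hf⟩
    set Bad : Finset (Fin (ℓ + s)) :=
      Finset.univ.filter (fun i => f i = z ∨ ∃ k, f i = y k) with hBad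
    have hBadmem : ∀ i, i ∈ Bad ↔ (f i = z ∨ ∃ k, f i = y k) := by
      intro i
      rw [hBad, Finset.mem_filter]
      simp
    have L1 : ∀ i j, (broomG ℓ s).Adj i j → i ∈ Bad → f j = v ∧ j ∉ Bad := by
      intro i j hij hi
      have hadj := hf i j hij
      have hfj : f j = v := by
        rcases (hBadmem i).mp hi with hz | ⟨k, hk⟩
        · rw [hz] at hadj
          exact (h3 (f j)).mp hadj
        · rw [hk] at hadj
          exact (h4 k (f j)).mp hadj
      refine ⟨hfj, ?_⟩
      rw [hBadmem, hfj]
      rintro (h | ⟨k, h⟩)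
      · exact hzv h.symm
      · exact hyv k h.symm
    have L2 : ∀ i j, (broomG ℓ s).Adj i j → i ∉ Bad → j ∉ Bad → C.Adj (f i) (f j) := by
      intro i j hij hi hj
      have hadj := hf i j hij
      rw [hCadj] at hadj
      rcases hadj with ⟨h, -⟩ | ⟨(h | ⟨k, h⟩), -⟩
      · exact h
      · rw [Sym2.eq_iff] at h
        exfalso
        rcases h with ⟨-, h2⟩ | ⟨h1, -⟩
        · exact hj ((hBadmem j).mpr (Or.inl h2))
        · exact hi ((hBadmem i).mpr (Or.inl h1))
      · rw [Sym2.eq_iff] at h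
        exfalso
        rcases h with ⟨-, h2⟩ | ⟨h1, -⟩
        · exact hj ((hBadmem j).mpr (Or.inr ⟨k, h2⟩))
        · exact hi ((hBadmem i).mpr (Or.inr ⟨k, h1⟩))
    by_cases hB : Bad = ∅
    · exact hfree ⟨f, fun a b hab => L2 a b hab (by simp [hB]) (by simp [hB])⟩
    obtain ⟨i0, hi0⟩ := Finset.nonempty_of_ne_empty hB
    obtain ⟨j0, hj0⟩ := broom_nbr hl i0
    obtain ⟨hfj0, hj0nb⟩ := L1 i0 j0 hj0 hi0
    set I : Finset V := (Finset.univ \ Bad).image f with hI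
    have hvI : v ∈ I := by
      rw [hI, Finset.mem_image]
      exact ⟨j0, by simp [Finset.mem_sdiff, hj0nb], hfj0⟩
    have hIcard : I.card = (ℓ + s) - Bad.card := by
      rw [hI, Finset.card_image_of_injective _ f.injective,
        Finset.card_sdiff_of_subset (Finset.subset_univ _)]
      simp
    set NF : Finset V := (Set.toFinite (C.neighborSet v)).toFinset with hNF
    have hNFmem : ∀ u, u ∈ NF ↔ C.Adj v u := by
      intro u
      rw [hNF, Set.Finite.mem_toFinset]
      rfl
    have hNFcard : NF.card = degp C v := by
      rw [hNF, degp, Set.ncard_eq_toFinset_card _ (Set.toFinite _)]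
    have hsub_erase : NF ∩ I ⊆ I.erase v := by
      intro u hu
      rw [Finset.mem_inter] at hu
      rw [Finset.mem_erase]
      refine ⟨?_, hu.2⟩
      intro h
      exact C.irrefl (h ▸ (hNFmem u).mp hu.1)
    have hcount : Bad.card ≤ (NF \ I).card := by
      have h1c := Finset.card_inter_add_card_sdiff NF I
      have h2c : (NF ∩ I).card ≤ I.card - 1 := by
        have h := Finset.card_le_card hsub_erase
        rwa [Finset.card_erase_of_mem hvI] at h
      have h3c : 1 ≤ Bad.card := Finset.card_pos.mpr ⟨i0, hi0⟩
      have h4c : Bad.card ≤ ℓ + s := by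
        have h := Finset.card_le_univ Bad
        simpa using h
      have h5c : 1 ≤ I.card := Finset.card_pos.mpr ⟨v, hvI⟩
      have h6c : ℓ + s - 1 ≤ NF.card := by rw [hNFcard]; exact hdegv
      omega
    obtain ⟨T, hTsub, hTcard⟩ := Finset.exists_subset_card_eq hcount
    have e : {a // a ∈ Bad} ≃ {a // a ∈ T} := Finset.equivOfCardEq hTcard.symm
    set g : Fin (ℓ + s) → V := fun i => if h : i ∈ Bad then (e ⟨i, h⟩ : V) else f i with hg
    have hgBad : ∀ i (h : i ∈ Bad), g i ∈ NF \ I := by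
      intro i h
      rw [hg]
      simp only [dif_pos h]
      exact hTsub (e ⟨i, h⟩).2
    have hgnon : ∀ i, i ∉ Bad → g i = f i := by
      intro i h
      rw [hg]
      simp only [dif_neg h]
    have hgnonI : ∀ i, i ∉ Bad → g i ∈ I := by
      intro i h
      rw [hgnon i h, hI, Finset.mem_image]
      exact ⟨i, by simp [Finset.mem_sdiff, h], rfl⟩
    have hginj : Function.Injective g := by
      intro i j hij
      by_cases hi : i ∈ Bad <;> by_cases hj : j ∈ Bad
      · rw [hg] at hij
        simp only [dif_pos hi, dif_pos hj] at hij
        have h := e.injective (Subtype.ext hij)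
        exact congrArg Subtype.val h
      · exfalso
        have h1' := hgBad i hi
        have h2' := hgnonI j hj
        rw [hij] at h1'
        exact (Finset.mem_sdiff.mp h1').2 h2'
      · exfalso
        have h1' := hgBad j hj
        have h2' := hgnonI i hi
        rw [← hij] at h1'
        exact (Finset.mem_sdiff.mp h1').2 h2'
      · rw [hgnon i hi, hgnon j hj] at hij
        exact f.injective hij
    have hgadj : ∀ a b, (broomG ℓ s).Adj a b → C.Adj (g a) (g b) := by
      intro a b hab
      by_cases ha : a ∈ Bad
      · obtain ⟨hfb, hbnb⟩ := L1 a b hab ha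
        have h1' := hgBad a ha
        rw [Finset.mem_sdiff] at h1'
        have hadjv : C.Adj v (g a) := (hNFmem (g a)).mp h1'.1
        rw [hgnon b hbnb, hfb]
        exact hadjv.symm
      · by_cases hb : b ∈ Bad
        · obtain ⟨hfa, hanb⟩ := L1 b a hab.symm hb
          have h1' := hgBad b hb
          rw [Finset.mem_sdiff] at h1'
          have hadjv : C.Adj v (g b) := (hNFmem (g b)).mp h1'.1
          rw [hgnon a ha, hfa]
          exact hadjv
        · rw [hgnon a ha, hgnon b hb]
          exact L2 a b hab ha hb
    exact hfree ⟨⟨g, hginj⟩, hgadj⟩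
  exact ⟨hfree', hmax', hdeg', hepC⟩


end Paper
end

section
/- Let p ≥ 2 and s ≥ 0. Suppose that every connected B_{5,s}-free graph C on c ≥ s + 5 vertices with Δ(C) ≥ s + 4 satisfies: e_p(C) ≤ e_p(H(c,5)) if s = 0, with equality if and only if C is isomorphic to H(c,5); and e_p(C) ≤ e_p(K_1 + M_{c−1}) if s ≥ 1, with equality if and only if C is isomorphic to K_1 + M_{c−1}. Then for every n > (2s+10)^2, ex_p(n, B_{5,s}) = e_p(H(n,5)) if s = 0 and ex_p(n, B_{5,s}) = e_p(K_1 + M_{n−1}) if s ≥ 1, and the corresponding graph (H(n,5) if s = 0, K_1 + M_{n−1} if s ≥ 1) is the unique extremal graph. -/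
open Finset

namespace Paper

lemma degp_eq_natCard {V : Type*} (G : SimpleGraph V) (v : V) :
    degp G v = Nat.card (G.neighborSet v) := (Nat.card_coe_set_eq _).symm

lemma degp_eq_degree {V : Type*} [Fintype V] (G : SimpleGraph V) [DecidableRel G.Adj] (v : V) :
    degp G v = G.degree v := by
  rw [degp_eq_natCard, Nat.card_eq_fintype_card, SimpleGraph.card_neighborSet_eq_degree]

lemma degp_iso {V W : Type*} {G : SimpleGraph V} {G' : SimpleGraph W} (φ : G ≃g G') (v : V) :
    degp G v = degp G' (φ v) := by
  rw [degp_eq_natCard, degp_eq_natCard]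
  exact Nat.card_congr (φ.mapNeighborSet v)

lemma ep_iso {V W : Type*} [Fintype V] [Fintype W] {G : SimpleGraph V} {G' : SimpleGraph W}
    (φ : G ≃g G') (p : ℕ) : ep p G = ep p G' := by
  unfold ep
  rw [← Equiv.sum_comp φ.toEquiv (fun w => degp G' w ^ p)]
  exact Finset.sum_congr rfl (fun v _ => by rw [degp_iso φ v]; rfl)

lemma free_iso {α V W : Type*} {H : SimpleGraph α} {G : SimpleGraph V} {G' : SimpleGraph W}
    (φ : G ≃g G') (h : Free H G) : Free H G' := by
  rintro ⟨f, hf⟩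
  refine h ⟨f.trans φ.symm.toEquiv.toEmbedding, fun a b hab => ?_⟩
  simpa using φ.symm.map_adj_iff.mpr (hf a b hab)


section restrict
variable {n m : ℕ} (G : SimpleGraph (Fin n)) (A : Set (Fin n)) (e : Fin m ≃ A)

def restr : SimpleGraph (Fin m) := G.comap (fun i => ((e i : A) : Fin n))

lemma restr_adj (i j : Fin m) : (restr G A e).Adj i j ↔ G.Adj ↑(e i) ↑(e j) := Iff.rfl

lemma free_restr {α : Type*} {H : SimpleGraph α} (h : Free H G) : Free H (restr G A e) := by
  rintro ⟨f, hf⟩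
  exact h ⟨f.trans ⟨fun i => ((e i : A) : Fin n),
    fun i j hij => e.injective (Subtype.ext hij)⟩, fun a b hab => hf a b hab⟩

lemma degp_restr (hA : ∀ u v, G.Adj u v → u ∈ A → v ∈ A) (i : Fin m) :
    degp (restr G A e) i = degp G ↑(e i) := by
  rw [degp_eq_natCard, degp_eq_natCard]
  refine Nat.card_congr ⟨fun x => ⟨↑(e x.1), x.2⟩,
    fun y => ⟨e.symm ⟨y.1, hA _ _ y.2 (e i).2⟩, ?_⟩, fun x => ?_, fun y => ?_⟩
  · show G.Adj ↑(e i) ↑(e (e.symm _)); rw [e.apply_symm_apply]; exact y.2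
  · ext; simp
  · ext; simp

end restrict

lemma sum_split {n : ℕ} (A : Set (Fin n)) {a b : ℕ} (eA : Fin a ≃ A) (eB : Fin b ≃ (Aᶜ : Set (Fin n)))
    (f : Fin n → ℕ) : ∑ v, f v = (∑ i, f ↑(eA i)) + ∑ i, f ↑(eB i) := by
  classical
  have h1 : ∑ i : Fin a, f ↑(eA i) = ∑ x : A, f ↑x := Fintype.sum_equiv eA _ _ (fun i => rfl)
  have h2 : ∑ i : Fin b, f ↑(eB i) = ∑ x : (Aᶜ : Set (Fin n)), f ↑x :=
    Fintype.sum_equiv eB _ _ (fun i => rfl)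
  rw [h1, h2]
  exact (Fintype.sum_subtype_add_sum_subtype _ f).symm

lemma ep_split {n : ℕ} (p : ℕ) (G : SimpleGraph (Fin n)) (A : Set (Fin n)) {a b : ℕ}
    (eA : Fin a ≃ A) (eB : Fin b ≃ (Aᶜ : Set (Fin n)))
    (hA : ∀ u v, G.Adj u v → (u ∈ A ↔ v ∈ A)) :
    ep p G = ep p (restr G A eA) + ep p (restr G Aᶜ eB) := by
  have hA1 : ∀ u v, G.Adj u v → u ∈ A → v ∈ A := fun u v h hu => (hA u v h).1 hu
  have hA2 : ∀ u v, G.Adj u v → u ∈ (Aᶜ : Set (Fin n)) → v ∈ (Aᶜ : Set (Fin n)) :=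
    fun u v h hu hv => hu ((hA u v h).2 hv)
  unfold ep
  rw [sum_split A eA eB]
  congr 1
  · exact Finset.sum_congr rfl fun i _ => by rw [degp_restr G A eA hA1 i]
  · exact Finset.sum_congr rfl fun i _ => by rw [degp_restr G Aᶜ eB hA2 i]

lemma hg_adj {n : ℕ} (x y : Fin n) :
    (HG n 5).Adj x y ↔ x ≠ y ∧ ((x:ℕ) = 0 ∨ (y:ℕ) = 0 ∨ ((x:ℕ)=1 ∧ (y:ℕ)=2) ∨ ((y:ℕ)=1 ∧ (x:ℕ)=2)) := by
  show x ≠ y ∧ _ ↔ _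
  simp only [show (5:ℕ)/2 = 2 from rfl, show Odd 5 ↔ True from iff_of_true ⟨2, by norm_num⟩ trivial,
    true_and]
  constructor
  · rintro ⟨hne, h⟩
    exact ⟨hne, by omega⟩
  · rintro ⟨hne, h⟩
    exact ⟨hne, by omega⟩

lemma hg_degp {n : ℕ} (hn : 3 ≤ n) (v : Fin n) :
    degp (HG n 5) v = if (v:ℕ) = 0 then n-1 else if (v:ℕ) < 3 then 2 else 1 := by
  classical
  rw [degp_eq_degree, SimpleGraph.degree, SimpleGraph.neighborFinset_eq_filter]
  split_ifs with h0 h3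
  · rw [show Finset.filter ((HG n 5).Adj v) Finset.univ = Finset.univ.erase v from ?_]
    · rw [Finset.card_erase_of_mem (Finset.mem_univ v), Finset.card_univ, Fintype.card_fin]
    · ext u
      simp only [Finset.mem_filter, Finset.mem_univ, true_and, Finset.mem_erase, hg_adj]
      constructor
      · rintro ⟨hne, _⟩; exact ⟨fun h => hne h.symm, trivial⟩
      · rintro ⟨hne, _⟩; exact ⟨fun h => hne h.symm, Or.inl h0⟩
  · -- v = 1 or 2
    rw [show Finset.filter ((HG n 5).Adj v) Finset.univ =
        {(⟨0, by omega⟩ : Fin n), ⟨3 - (v:ℕ), by omega⟩} from ?_]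
    · rw [Finset.card_insert_of_notMem (by simp [Fin.ext_iff]; omega), Finset.card_singleton]
    · ext u
      simp only [Finset.mem_filter, Finset.mem_univ, true_and, hg_adj, Finset.mem_insert,
        Finset.mem_singleton, Fin.ext_iff, ne_eq]
      omega
  · rw [show Finset.filter ((HG n 5).Adj v) Finset.univ = {(⟨0, by omega⟩ : Fin n)} from ?_]
    · simp
    · ext u
      simp only [Finset.mem_filter, Finset.mem_univ, true_and, hg_adj, Finset.mem_singleton,
        Fin.ext_iff, ne_eq]
      omega

lemma range_split3 {n : ℕ} (hn : 3 ≤ n) :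
    Finset.range n = insert 0 (insert 1 (insert 2 (Finset.Ico 3 n))) := by
  ext x; simp; omega

lemma ep_hg {n : ℕ} (hn : 3 ≤ n) (p : ℕ) :
    ep p (HG n 5) = (n-1)^p + 2*2^p + (n-3) := by
  unfold ep
  have : ∀ v : Fin n, degp (HG n 5) v ^ p
      = (fun i => (if i = 0 then n-1 else if i < 3 then 2 else 1)^p) (v:ℕ) :=
    fun v => by rw [hg_degp hn]
  rw [Finset.sum_congr rfl (fun v _ => this v),
    Fin.sum_univ_eq_sum_range (fun i => (if i = 0 then n-1 else if i < 3 then 2 else 1)^p) n]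
  rw [range_split3 hn]
  rw [Finset.sum_insert (by simp), Finset.sum_insert (by simp), Finset.sum_insert (by simp)]
  have hico : ∑ x ∈ Finset.Ico 3 n, (if x = 0 then n-1 else if x < 3 then 2 else 1)^p = n - 3 := by
    calc ∑ x ∈ Finset.Ico 3 n, (if x = 0 then n-1 else if x < 3 then 2 else 1)^p
        = ∑ _x ∈ Finset.Ico 3 n, 1 := Finset.sum_congr rfl fun x hx => by
          simp only [Finset.mem_Ico] at hx
          rw [if_neg (by omega), if_neg (by omega), one_pow]
      _ = n - 3 := by simp
  rw [hico]
  norm_num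
  generalize (n-1)^p = a
  generalize 2^p = b
  ring_nf

noncomputable abbrev JG (m : ℕ) := joinG (⊤ : SimpleGraph (Fin 1)) (matchG m)

lemma jg_adj_lr {m : ℕ} (a : Fin 1) (b : Fin m) : (JG m).Adj (Sum.inl a) (Sum.inr b) := by
  refine ⟨by simp, Or.inl trivial⟩

lemma matchg_adj {m : ℕ} (b b' : Fin m) :
    (matchG m).Adj b b' ↔ b ≠ b' ∧ (b:ℕ)/2 = (b':ℕ)/2 := by
  show b ≠ b' ∧ _ ↔ _
  constructor
  · rintro ⟨h1, h2 | h2⟩ <;> exact ⟨h1, by omega⟩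
  · rintro ⟨h1, h2⟩; exact ⟨h1, Or.inl h2⟩

lemma jg_adj_rr {m : ℕ} (b b' : Fin m) :
    (JG m).Adj (Sum.inr b) (Sum.inr b') ↔ b ≠ b' ∧ (b:ℕ)/2 = (b':ℕ)/2 := by
  show (Sum.inr b ≠ Sum.inr b') ∧ ((matchG m).Adj b b' ∨ (matchG m).Adj b' b) ↔ _
  rw [matchg_adj, matchg_adj]
  constructor
  · rintro ⟨h1, h2 | h2⟩
    · exact h2
    · exact ⟨fun h => h2.1 h.symm, h2.2.symm⟩
  · rintro ⟨h1, h2⟩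
    exact ⟨by simpa using h1, Or.inl ⟨h1, h2⟩⟩

lemma jg_adj_cases {m : ℕ} (b : Fin m) (z : Fin 1 ⊕ Fin m) (h : (JG m).Adj (Sum.inr b) z) :
    z = Sum.inl 0 ∨ ∃ b' : Fin m, z = Sum.inr b' ∧ (b:ℕ) ≠ (b':ℕ) ∧ (b:ℕ)/2 = (b':ℕ)/2 := by
  match z with
  | Sum.inl a => exact Or.inl (by rw [Subsingleton.elim a 0])
  | Sum.inr b' =>
    right
    have := (jg_adj_rr b b').mp h
    exact ⟨b', rfl, fun hv => this.1 (Fin.ext hv), this.2⟩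

lemma degp_jg_inl {m : ℕ} (a : Fin 1) : degp (JG m) (Sum.inl a) = m := by
  classical
  rw [degp_eq_degree, SimpleGraph.degree, SimpleGraph.neighborFinset_eq_filter]
  rw [show Finset.filter ((JG m).Adj (Sum.inl a)) Finset.univ = Finset.univ.erase (Sum.inl a) from ?_]
  · rw [Finset.card_erase_of_mem (Finset.mem_univ _), Finset.card_univ]
    simp
  · ext z
    simp only [Finset.mem_filter, Finset.mem_univ, true_and, Finset.mem_erase]
    constructor
    · intro h; exact ⟨(h.ne).symm, trivial⟩
    · rintro ⟨hne, _⟩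
      match z with
      | Sum.inl a' => exact absurd (by rw [Subsingleton.elim a' a]) hne
      | Sum.inr b => exact jg_adj_lr a b

lemma degp_jg_inr_le {m : ℕ} (b : Fin m) : degp (JG m) (Sum.inr b) ≤ 2 := by
  classical
  rw [degp_eq_degree, SimpleGraph.degree]
  have hsub : (JG m).neighborFinset (Sum.inr b) ⊆
      insert (Sum.inl 0) ((Finset.univ.filter
        (fun j : Fin m => (j:ℕ) ≠ (b:ℕ) ∧ (j:ℕ)/2 = (b:ℕ)/2)).image Sum.inr) := by
    intro z hz
    rw [SimpleGraph.mem_neighborFinset] at hz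
    rcases jg_adj_cases b z hz with h | ⟨b', rfl, h1, h2⟩
    · simp [h]
    · simp only [Finset.mem_insert, Finset.mem_image, Finset.mem_filter, Finset.mem_univ]
      exact Or.inr ⟨b', ⟨trivial, by omega, by omega⟩, rfl⟩
  have h1 : (Finset.univ.filter
      (fun j : Fin m => (j:ℕ) ≠ (b:ℕ) ∧ (j:ℕ)/2 = (b:ℕ)/2)).card ≤ 1 := by
    refine Finset.card_le_one.mpr ?_
    intro x hx y hy
    simp only [Finset.mem_filter] at hx hy
    refine Fin.ext ?_
    omega
  calc ((JG m).neighborFinset (Sum.inr b)).card ≤ _ := Finset.card_le_card hsub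
    _ ≤ ((Finset.univ.filter
        (fun j : Fin m => (j:ℕ) ≠ (b:ℕ) ∧ (j:ℕ)/2 = (b:ℕ)/2)).image Sum.inr).card + 1 :=
      Finset.card_insert_le _ _
    _ ≤ 1 + 1 := Nat.add_le_add_right (le_trans (Finset.card_image_le) h1) 1

lemma degp_jg_inr_ge1 {m : ℕ} (b : Fin m) : 1 ≤ degp (JG m) (Sum.inr b) := by
  classical
  rw [degp_eq_degree]
  refine Finset.card_pos.mpr ⟨Sum.inl 0, ?_⟩
  rw [SimpleGraph.mem_neighborFinset]
  exact (jg_adj_lr 0 b).symm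

lemma degp_jg_inr_ge2 {m : ℕ} (b : Fin m) (hb : (b:ℕ) < m - 1) : 2 ≤ degp (JG m) (Sum.inr b) := by
  classical
  rw [degp_eq_degree]
  have hm : 2 ≤ m := by omega
  set b' : Fin m := if (b:ℕ) % 2 = 0 then ⟨(b:ℕ)+1, by omega⟩ else ⟨(b:ℕ)-1, by omega⟩ with hb'
  have hbv : (b':ℕ) ≠ (b:ℕ) ∧ (b':ℕ)/2 = (b:ℕ)/2 := by
    rw [hb']; split_ifs with h <;> simp <;> omega
  have hsub : ({Sum.inl 0, Sum.inr b'} : Finset (Fin 1 ⊕ Fin m)) ⊆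
      (JG m).neighborFinset (Sum.inr b) := by
    intro z hz
    simp only [Finset.mem_insert, Finset.mem_singleton] at hz
    rw [SimpleGraph.mem_neighborFinset]
    rcases hz with rfl | rfl
    · exact (jg_adj_lr 0 b).symm
    · exact (jg_adj_rr b b').mpr ⟨fun h => hbv.1 (by rw [h]), hbv.2.symm⟩
  calc (2:ℕ) = ({Sum.inl 0, Sum.inr b'} : Finset (Fin 1 ⊕ Fin m)).card := by simp
    _ ≤ _ := Finset.card_le_card hsub
lemma ep_sum_type {m : ℕ} (p : ℕ) (G : SimpleGraph (Fin 1 ⊕ Fin m)) :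
    ep p G = (degp G (Sum.inl 0))^p + ∑ b : Fin m, (degp G (Sum.inr b))^p := by
  unfold ep
  rw [Fintype.sum_sum_type]
  congr 1

lemma ep_jg_le (p m : ℕ) : ep p (JG m) ≤ m^p + m * 2^p := by
  rw [ep_sum_type]
  have h1 : ∑ b : Fin m, (degp (JG m) (Sum.inr b))^p ≤ ∑ _b : Fin m, 2^p :=
    Finset.sum_le_sum fun b _ => Nat.pow_le_pow_left (degp_jg_inr_le b) p
  rw [degp_jg_inl]
  have h2 : ∑ _b : Fin m, 2^p = m * 2^p := by simp [mul_comm]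
  omega

lemma ep_jg_ge (p m : ℕ) (hp : 1 ≤ p) (hm : 1 ≤ m) : m^p + (m-1) * 2^p + 1 ≤ ep p (JG m) := by
  rw [ep_sum_type]
  have h1 : ∑ b : Fin m, ((fun i => if i < m-1 then 2^p else 1) ((b:ℕ)))
      ≤ ∑ b : Fin m, (degp (JG m) (Sum.inr b))^p := by
    refine Finset.sum_le_sum fun b _ => ?_
    by_cases hb : (b:ℕ) < m - 1
    · simp only [hb, if_pos]
      exact Nat.pow_le_pow_left (degp_jg_inr_ge2 b hb) p
    · simp only [hb, if_neg, if_false]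
      calc 1 ≤ degp (JG m) (Sum.inr b) := degp_jg_inr_ge1 b
        _ ≤ _ := Nat.le_self_pow (by omega) _
  have h2 : ∑ b : Fin m, ((fun i => if i < m-1 then 2^p else 1) ((b:ℕ))) = (m-1)*2^p + 1 := by
    rw [Fin.sum_univ_eq_sum_range (fun i => if i < m-1 then 2^p else 1) m]
    have : m = (m-1) + 1 := by omega
    rw [this, Finset.sum_range_succ, if_neg (by omega)]
    congr 1
    calc ∑ x ∈ Finset.range (m-1), (if x < m-1+1-1 then 2^p else 1)
        = ∑ _x ∈ Finset.range (m-1), 2^p := Finset.sum_congr rfl fun x hx => by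
          rw [if_pos (by simp at hx; omega)]
      _ = (m-1) * 2^p := by simp [mul_comm]
  rw [degp_jg_inl]
  omega

lemma broom_adj {s : ℕ} (i j : Fin (5 + s))
    (h : ((i:ℕ)+1 = (j:ℕ) ∧ (j:ℕ) < 5) ∨ ((i:ℕ) = 3 ∧ 5 ≤ (j:ℕ))) :
    (broomG 5 s).Adj i j := by
  refine ⟨Fin.ne_of_val_ne (by omega), Or.inl ?_⟩
  show ((i:ℕ)+1 = (j:ℕ) ∧ (j:ℕ) < 5) ∨ ((i:ℕ) = 5 - 2 ∧ 5 ≤ (j:ℕ))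
  omega

lemma free_hg {n : ℕ} (hn : 3 ≤ n) : Free (broomG 5 0) (HG n 5) := by
  rintro ⟨f, hf⟩
  have k0 : (0:ℕ) < 5 + 0 := by omega
  have k1 : (1:ℕ) < 5 + 0 := by omega
  have k2 : (2:ℕ) < 5 + 0 := by omega
  have k3 : (3:ℕ) < 5 + 0 := by omega
  have k4 : (4:ℕ) < 5 + 0 := by omega
  have a01 := (hg_adj _ _).mp (hf ⟨0,k0⟩ ⟨1,k1⟩ (broom_adj _ _ (by simp)))
  have a12 := (hg_adj _ _).mp (hf ⟨1,k1⟩ ⟨2,k2⟩ (broom_adj _ _ (by simp)))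
  have a23 := (hg_adj _ _).mp (hf ⟨2,k2⟩ ⟨3,k3⟩ (broom_adj _ _ (by simp)))
  have a34 := (hg_adj _ _).mp (hf ⟨3,k3⟩ ⟨4,k4⟩ (broom_adj _ _ (by simp)))
  have hne : ∀ (a b : Fin (5+0)), (a:ℕ) ≠ (b:ℕ) → ((f a):ℕ) ≠ ((f b):ℕ) :=
    fun a b hab h => hab (congrArg Fin.val (f.injective (Fin.ext h)))
  have n02 := hne ⟨0,k0⟩ ⟨2,k2⟩ (by simp)
  have n03 := hne ⟨0,k0⟩ ⟨3,k3⟩ (by simp)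
  have n04 := hne ⟨0,k0⟩ ⟨4,k4⟩ (by simp)
  have n13 := hne ⟨1,k1⟩ ⟨3,k3⟩ (by simp)
  have n14 := hne ⟨1,k1⟩ ⟨4,k4⟩ (by simp)
  have n24 := hne ⟨2,k2⟩ ⟨4,k4⟩ (by simp)
  have n01 := hne ⟨0,k0⟩ ⟨1,k1⟩ (by simp)
  have n12 := hne ⟨1,k1⟩ ⟨2,k2⟩ (by simp)
  have n23 := hne ⟨2,k2⟩ ⟨3,k3⟩ (by simp)
  have n34 := hne ⟨3,k3⟩ ⟨4,k4⟩ (by simp)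
  obtain ⟨-, h01⟩ := a01
  obtain ⟨-, h12⟩ := a12
  obtain ⟨-, h23⟩ := a23
  obtain ⟨-, h34⟩ := a34
  omega

lemma free_jg {s m : ℕ} (hs : 1 ≤ s) : Free (broomG 5 s) (JG m) := by
  rintro ⟨f, hf⟩
  have k0 : (0:ℕ) < 5 + s := by omega
  have k1 : (1:ℕ) < 5 + s := by omega
  have k2 : (2:ℕ) < 5 + s := by omega
  have k3 : (3:ℕ) < 5 + s := by omega
  have k4 : (4:ℕ) < 5 + s := by omega
  have k5 : (5:ℕ) < 5 + s := by omega
  have a01 := hf ⟨0,k0⟩ ⟨1,k1⟩ (broom_adj _ _ (by simp))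
  have a12 := hf ⟨1,k1⟩ ⟨2,k2⟩ (broom_adj _ _ (by simp))
  have a23 := hf ⟨2,k2⟩ ⟨3,k3⟩ (broom_adj _ _ (by simp))
  have a34 := hf ⟨3,k3⟩ ⟨4,k4⟩ (broom_adj _ _ (by simp))
  have a35 := hf ⟨3,k3⟩ ⟨5,k5⟩ (broom_adj _ _ (by simp))
  have hne : ∀ (a b : Fin (5+s)), (a:ℕ) ≠ (b:ℕ) → f a ≠ f b :=
    fun a b hab h => hab (congrArg Fin.val (f.injective h))
  -- f 3 must be inl 0
  rcases h3 : f ⟨3,k3⟩ with a | b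
  · -- f3 = inl a; then f0 f1 f2 are all inr
    have ha : a = 0 := Subsingleton.elim a 0
    subst ha
    have getr : ∀ (x : Fin (5+s)), (x:ℕ) ≠ 3 → ∃ c : Fin m, f x = Sum.inr c := by
      intro x hx
      rcases hfx : f x with a' | c
      · exfalso
        exact hne x ⟨3,k3⟩ (by simpa using hx) (by rw [hfx, h3, Subsingleton.elim a' 0])
      · exact ⟨c, rfl⟩
    obtain ⟨c0, h0⟩ := getr ⟨0,k0⟩ (by simp)
    obtain ⟨c1, h1⟩ := getr ⟨1,k1⟩ (by simp)
    obtain ⟨c2, h2⟩ := getr ⟨2,k2⟩ (by simp)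
    rw [h0, h1] at a01
    rw [h1, h2] at a12
    have e01 := (jg_adj_rr _ _).mp a01
    have e12 := (jg_adj_rr _ _).mp a12
    have n02 : c0 ≠ c2 := by
      intro h
      exact hne ⟨0,k0⟩ ⟨2,k2⟩ (by simp) (by rw [h0, h2, h])
    have v01 : (c0:ℕ) ≠ (c1:ℕ) := fun h => e01.1 (Fin.ext h)
    have v12 : (c1:ℕ) ≠ (c2:ℕ) := fun h => e12.1 (Fin.ext h)
    have v02 : (c0:ℕ) ≠ (c2:ℕ) := fun h => n02 (Fin.ext h)
    have q1 := e01.2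
    have q2 := e12.2
    omega
  · -- f3 = inr b: f2 f4 f5 are three distinct neighbors of inr b
    have c2 := jg_adj_cases b (f ⟨2,k2⟩) (by rw [← h3]; exact (a23).symm)
    have c4 := jg_adj_cases b (f ⟨4,k4⟩) (by rw [← h3]; exact a34)
    have c5 := jg_adj_cases b (f ⟨5,k5⟩) (by rw [← h3]; exact a35)
    have n24 : f ⟨2,k2⟩ ≠ f ⟨4,k4⟩ := hne _ _ (by simp)
    have n25 : f ⟨2,k2⟩ ≠ f ⟨5,k5⟩ := hne _ _ (by simp)
    have n45 : f ⟨4,k4⟩ ≠ f ⟨5,k5⟩ := hne _ _ (by simp)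
    have pairink : ∀ (u v : Fin 1 ⊕ Fin m), u ≠ v →
        (u = Sum.inl 0 ∨ ∃ b' : Fin m, u = Sum.inr b' ∧ (b:ℕ) ≠ (b':ℕ) ∧ (b:ℕ)/2 = (b':ℕ)/2) →
        (v = Sum.inl 0 ∨ ∃ b' : Fin m, v = Sum.inr b' ∧ (b:ℕ) ≠ (b':ℕ) ∧ (b:ℕ)/2 = (b':ℕ)/2) →
        (∃ bu bv : Fin m, u = Sum.inr bu ∧ v = Sum.inr bv ∧ (bu:ℕ) ≠ (bv:ℕ) ∧
          (b:ℕ) ≠ (bu:ℕ) ∧ (b:ℕ)/2 = (bu:ℕ)/2 ∧ (b:ℕ) ≠ (bv:ℕ) ∧ (b:ℕ)/2 = (bv:ℕ)/2) ∨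
        u = Sum.inl 0 ∨ v = Sum.inl 0 := by
      rintro u v huv (rfl | ⟨bu, rfl, hu1, hu2⟩) hv
      · exact Or.inr (Or.inl rfl)
      · rcases hv with rfl | ⟨bv, rfl, hv1, hv2⟩
        · exact Or.inr (Or.inr rfl)
        · refine Or.inl ⟨bu, bv, rfl, rfl, ?_, hu1, hu2, hv1, hv2⟩
          intro h
          exact huv (by rw [Fin.ext h])
    -- among three distinct, two eventually inr with contradiction
    rcases pairink _ _ n24 c2 c4 with ⟨b2, b4, _, _, hno, x1, x2, x3, x4⟩ | h2l | h4l
    · omega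
    · -- f2 = inl 0, so f4 f5 both must give the inr case
      rcases pairink _ _ n45 c4 c5 with ⟨b4, b5, _, _, hno, x1, x2, x3, x4⟩ | h4l | h5l
      · omega
      · exact n24 (by rw [h2l, h4l])
      · exact n25 (by rw [h2l, h5l])
    · rcases pairink _ _ n25 c2 c5 with ⟨b2, b5, _, _, hno, x1, x2, x3, x4⟩ | h2l | h5l
      · omega
      · exact n24 (by rw [h2l, h4l])
      · exact n45 (by rw [h4l, h5l])


lemma pow_sub_ge {a b d p : ℕ} (hp : 1 ≤ p) (h : a = b + d) : b^p + d * a^(p-1) ≤ a^p := by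
  have ha : a^p = b * a^(p-1) + d * a^(p-1) := by
    have h1 : a^p = a * a^(p-1) := by
      conv_lhs => rw [show p = 1 + (p-1) by omega]
      rw [pow_add, pow_one]
    rw [h1]
    nth_rewrite 1 [h]
    ring
  have hb : b^p ≤ b * a^(p-1) := by
    have h1 : b^p = b * b^(p-1) := by
      conv_lhs => rw [show p = 1 + (p-1) by omega]
      rw [pow_add, pow_one]
    rw [h1]
    exact Nat.mul_le_mul_left b (Nat.pow_le_pow_left (by omega) _)
  omega

lemma key_ineq {p s n : ℕ} (hp : 2 ≤ p) (hn : (2*s+10)^2 < n) :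
    4 * (s+3)^p ≤ (n-1)^(p-1) := by
  have e1 : (2*s+10)^2 = 4*(s*s) + 40*s + 100 := by ring
  have e2 : (s+3)^2 = s*s + 6*s + 9 := by ring
  have h1 : 4*(s+3)^2 ≤ n - 1 := by omega
  calc 4 * (s+3)^p ≤ 4^(p-1) * (s+3)^p := Nat.mul_le_mul_right _ (by
      calc (4:ℕ) = 4^1 := (pow_one 4).symm
        _ ≤ 4^(p-1) := Nat.pow_le_pow_right (by omega) (by omega))
    _ ≤ 4^(p-1) * (s+3)^(2*(p-1)) := Nat.mul_le_mul_left _ (Nat.pow_le_pow_right (by omega) (by omega))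
    _ = (4 * (s+3)^2)^(p-1) := by rw [mul_pow, pow_mul]
    _ ≤ (n-1)^(p-1) := Nat.pow_le_pow_left h1 _

lemma arith0 {p s n SP : ℕ} (hp : 2 ≤ p) (hn : (2*s+10)^2 < n) (hSP : SP = (s+3)^p) :
    n * SP < (n-1)^p := by
  have hk := key_ineq hp hn
  have e1 : (2*s+10)^2 = 4*(s*s) + 40*s + 100 := by ring
  have hn2 : 101 ≤ n := by omega
  have h5 : 1 ≤ SP := by rw [hSP]; exact Nat.one_le_pow _ _ (by omega)
  set r := n - 1 with hr
  have hrn : n = r + 1 := by omega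
  have hr1 : 1 ≤ r := by omega
  have hkr : 4 * SP ≤ r^(p-1) := by rw [hSP]; exact hk
  have h6 : n * SP < 4 * (r * SP) := by
    have := Nat.mul_le_mul hr1 h5
    nlinarith
  have h7 : 4 * (r * SP) = (4 * SP) * r := by ring
  have h8 : (4*SP) * r ≤ r^(p-1) * r := Nat.mul_le_mul_right _ hkr
  have h9 : r^(p-1) * r = r^p := by
    conv_rhs => rw [show p = (p-1) + 1 by omega]
    rw [pow_succ]
  omega

lemma arith1 {p s n SP K t j : ℕ} (hp : 2 ≤ p) (hn : (2*s+10)^2 < n) (hSP : SP = (s+3)^p)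
    (hK1 : 1 ≤ K) (hKSP : K ≤ SP) (hj : 1 ≤ j) (htj2 : 2 ≤ t + j) (htjn : t + j ≤ n) :
    (n-t-j)^p + j*K + t*SP + 2 ≤ (n-1)^p + K := by
  have hk := key_ineq hp hn
  have e1 : (2*s+10)^2 = 4*(s*s) + 40*s + 100 := by ring
  have hn2 : 101 ≤ n := by omega
  set d := t + j - 1 with hd
  have hd1 : 1 ≤ d := by omega
  have hsum : n - 1 = (n-t-j) + d := by omega
  have hpow := pow_sub_ge (p := p) (by omega) hsum
  have hSP1 : 1 ≤ SP := by rw [hSP]; exact Nat.one_le_pow _ _ (by omega)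
  have hkr : 4 * SP ≤ (n-1)^(p-1) := by rw [hSP]; exact hk
  have hdSP : 1 ≤ d * SP := Nat.one_le_iff_ne_zero.mpr (by positivity)
  have hstep : j*K + t*SP + 2 ≤ d * (4 * SP) + K := by
    have e1' : j*K ≤ j*SP := Nat.mul_le_mul_left _ hKSP
    have e2 : j*SP + t*SP = (d+1)*SP := by rw [show d + 1 = j + t by omega]; ring
    have e3 : (d+1)*SP = d*SP + SP := by ring
    have e4 : d*(4*SP) = 4*(d*SP) := by ring
    have e5 : SP ≤ d*SP := by calc SP = 1*SP := (one_mul SP).symm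
                                   _ ≤ d*SP := Nat.mul_le_mul_right _ hd1
    omega
  have hmul : d * (4 * SP) ≤ d * (n-1)^(p-1) := Nat.mul_le_mul_left _ hkr
  omega

lemma two_two_le_three {p : ℕ} (hp : 2 ≤ p) : 2 * 2^p ≤ 3^p := by
  induction p with
  | zero => omega
  | succ q ih =>
    rcases Nat.lt_or_ge q 2 with h | h
    · interval_cases q <;> simp_all <;> omega
    · have := ih (by omega)
      have h2 : 2^(q+1) = 2 * 2^q := by ring
      have h3 : 3^(q+1) = 3 * 3^q := by ring
      nlinarith [Nat.one_le_pow q 2 (by omega)]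

/-- The per-component structure lemma, by strong induction. -/
lemma lemmaM (p s K U SP : ℕ) (hp : 2 ≤ p) (hSP : SP = (s+3)^p)
    (hbig : ∀ c, s + 5 ≤ c → ∀ C : SimpleGraph (Fin c), C.Connected → Free (broomG 5 s) C →
      (∃ w, s+4 ≤ degp C w) → ep p C ≤ (c-1)^p + K + (c-1)*U) :
    ∀ m, ∀ G : SimpleGraph (Fin m), 1 ≤ m → Free (broomG 5 s) G →
    ∃ t j, t + j ≤ m ∧ 1 ≤ t + j ∧ (j = 0 → t = m) ∧ (¬ G.Connected → 2 ≤ t + j) ∧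
      ep p G ≤ (m - t - j)^p + j*K + (m-t-j)*U + t*SP := by
  intro m
  induction m using Nat.strong_induction_on with
  | _ m ih =>
  intro G hm hfree
  classical
  by_cases hconn : G.Connected
  · by_cases hdeg : ∃ w, s+4 ≤ degp G w
    · -- connected with a large-degree vertex
      have hm5 : s + 5 ≤ m := by
        obtain ⟨w, hw⟩ := hdeg
        have hlt : degp G w < m := by
          rw [degp_eq_degree]
          simpa using G.degree_lt_card_verts w
        omega
      refine ⟨0, 1, by omega, by omega, by omega, fun h => absurd hconn h, ?_⟩
      have := hbig m hm5 G hconn hfree hdeg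
      have h0 : m - 0 - 1 = m - 1 := by omega
      rw [h0]
      omega
    · -- all degrees small
      push_neg at hdeg
      refine ⟨m, 0, by omega, by omega, fun _ => rfl, fun h => absurd hconn h, ?_⟩
      have hb : ep p G ≤ ∑ _v : Fin m, SP := by
        refine Finset.sum_le_sum fun v _ => ?_
        rw [hSP]
        exact Nat.pow_le_pow_left (by have := hdeg v; omega) p
      have hz : m - m - 0 = 0 := by omega
      rw [hz, zero_pow (by omega), zero_mul]
      simp only [Finset.sum_const, Finset.card_univ, Fintype.card_fin, smul_eq_mul] at hb
      omega
  · -- disconnected: split along a reachability class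
    have hnp : ¬ G.Preconnected := by
      intro h
      haveI : Nonempty (Fin m) := ⟨⟨0, by omega⟩⟩
      exact hconn ⟨h⟩
    rw [SimpleGraph.Preconnected] at hnp
    push_neg at hnp
    obtain ⟨v, w, hvw⟩ := hnp
    set A : Set (Fin m) := {u | G.Reachable v u} with hAdef
    have hAcl : ∀ u x, G.Adj u x → (u ∈ A ↔ x ∈ A) := by
      intro u x hux
      constructor
      · intro hu; exact hu.trans hux.reachable
      · intro hx; exact hx.trans hux.symm.reachable
    have hvA : v ∈ A := SimpleGraph.Reachable.refl v
    have hwA : w ∉ A := hvw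
    set a := Fintype.card A with hadef
    set b := Fintype.card (Aᶜ : Set (Fin m)) with hbdef
    have hab : a + b = m := by
      rw [hadef, hbdef]
      have hc : Fintype.card (Aᶜ : Set (Fin m)) = Fintype.card (Fin m) - Fintype.card A :=
        Fintype.card_subtype_compl _
      have hle : Fintype.card A ≤ Fintype.card (Fin m) :=
        Fintype.card_le_of_injective _ Subtype.val_injective
      rw [Fintype.card_fin] at *
      omega
    have ha1 : 1 ≤ a := Fintype.card_pos_iff.mpr ⟨⟨v, hvA⟩⟩
    have hb1 : 1 ≤ b := Fintype.card_pos_iff.mpr ⟨⟨w, hwA⟩⟩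
    set eA := (Fintype.equivFin A).symm with heA
    set eB := (Fintype.equivFin (Aᶜ : Set (Fin m))).symm with heB
    have hsplit := ep_split p G A eA eB hAcl
    obtain ⟨t1, j1, h1a, h1b, h1c, _, h1d⟩ :=
      ih a (by omega) (restr G A eA) (by omega) (free_restr G A eA hfree)
    obtain ⟨t2, j2, h2a, h2b, h2c, _, h2d⟩ :=
      ih b (by omega) (restr G (Aᶜ) eB) (by omega) (free_restr G (Aᶜ) eB hfree)
    refine ⟨t1+t2, j1+j2, by omega, by omega, ?_, fun _ => by omega, ?_⟩
    · intro hj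
      have e1 := h1c (by omega)
      have e2 := h2c (by omega)
      omega
    · set x := a - t1 - j1 with hx
      set y := b - t2 - j2 with hy
      set z := m - (t1+t2) - (j1+j2) with hz
      have hxyz : x + y ≤ z := by omega
      have hpow : x^p + y^p ≤ z^p :=
        le_trans (pow_add_pow_le (Nat.zero_le x) (Nat.zero_le y) (by omega))
          (Nat.pow_le_pow_left hxyz p)
      have hU : x*U + y*U ≤ z*U := by
        rw [← add_mul]
        exact Nat.mul_le_mul_right U hxyz
      calc ep p G = ep p (restr G A eA) + ep p (restr G (Aᶜ) eB) := hsplit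
        _ ≤ (x^p + j1*K + x*U + t1*SP) + (y^p + j2*K + y*U + t2*SP) := by
            exact Nat.add_le_add h1d h2d
        _ ≤ z^p + (j1+j2)*K + z*U + (t1+t2)*SP := by
            have : (j1+j2)*K = j1*K + j2*K := by ring
            have h2 : (t1+t2)*SP = t1*SP + t2*SP := by ring
            omega


lemma mainBound (p s K U SP Emax n : ℕ) (hp : 2 ≤ p) (hn : (2*s+10)^2 < n)
    (hSP : SP = (s+3)^p) (hK1 : 1 ≤ K) (hKSP : K ≤ SP)
    (hbig : ∀ c, s + 5 ≤ c → ∀ C : SimpleGraph (Fin c), C.Connected → Free (broomG 5 s) C →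
      (∃ w, s+4 ≤ degp C w) → ep p C ≤ (c-1)^p + K + (c-1)*U)
    (hbigTop : ∀ G : SimpleGraph (Fin n), G.Connected → Free (broomG 5 s) G →
      (∃ w, s+4 ≤ degp G w) → ep p G ≤ Emax)
    (hEmax : (n-1)^p + (n-2)*U + (K-1) ≤ Emax) :
    ∀ G : SimpleGraph (Fin n), Free (broomG 5 s) G →
      ep p G ≤ Emax ∧ (¬(G.Connected ∧ ∃ w, s+4 ≤ degp G w) → ep p G < Emax) := by
  intro G hfree
  have hn1 : 101 ≤ n := by
    have e1 : (2*s+10)^2 = 4*(s*s) + 40*s + 100 := by ring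
    omega
  by_cases hcb : G.Connected ∧ ∃ w, s+4 ≤ degp G w
  · exact ⟨hbigTop G hcb.1 hfree hcb.2, fun h => absurd hcb h⟩
  · have hstrict : ep p G < Emax := by
      have ha0 := arith0 (n := n) (SP := SP) hp hn hSP
      have hle : (n-1)^p ≤ Emax := le_trans (by omega) hEmax
      by_cases hconn : G.Connected
      · have hdeg : ∀ v, degp G v ≤ s+3 := by
          by_contra h
          push_neg at h
          obtain ⟨v, hv⟩ := h
          exact hcb ⟨hconn, ⟨v, by omega⟩⟩
        have hb : ep p G ≤ n * SP := by
          have h2 : ep p G ≤ ∑ _v : Fin n, SP := Finset.sum_le_sum fun v _ => by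
            rw [hSP]; exact Nat.pow_le_pow_left (hdeg v) p
          simpa using h2
        omega
      · obtain ⟨t, j, hta, htb, htc, htd, hte⟩ :=
          lemmaM p s K U SP hp hSP hbig n G (by omega) hfree
        have htj2 : 2 ≤ t + j := htd hconn
        rcases Nat.eq_zero_or_pos j with hj0 | hj1
        · have ht : t = n := htc hj0
          subst hj0
          rw [ht] at hte
          have hz : n - n - 0 = 0 := by omega
          rw [hz, zero_pow (by omega)] at hte
          omega
        · have h1 := arith1 (n := n) (K := K) (t := t) (j := j) hp hn hSP hK1 hKSP hj1 htj2 hta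
          have hz : n - t - j ≤ n - 2 := by omega
          have hU : (n-t-j)*U ≤ (n-2)*U := Nat.mul_le_mul_right _ hz
          omega
    exact ⟨le_of_lt hstrict, fun _ => hstrict⟩


/-- reduction for `B_{5,s}` to connected graphs. -/
theorem broom5_reduction (p s : ℕ) (hp : 2 ≤ p)
    (hyp : ∀ c, s + 5 ≤ c → ∀ C : SimpleGraph (Fin c), C.Connected →
      Free (broomG 5 s) C → (∃ w, s + 4 ≤ degp C w) →
      if s = 0 then
        ep p C ≤ ep p (HG c 5) ∧ (ep p C = ep p (HG c 5) ↔ Nonempty (C ≃g HG c 5))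
      else
        ep p C ≤ ep p (joinG (⊤ : SimpleGraph (Fin 1)) (matchG (c - 1))) ∧
          (ep p C = ep p (joinG (⊤ : SimpleGraph (Fin 1)) (matchG (c - 1))) ↔
            Nonempty (C ≃g joinG (⊤ : SimpleGraph (Fin 1)) (matchG (c - 1))))) :
    ∀ n, (2 * s + 10) ^ 2 < n →
      (exDP n p (broomG 5 s) =
        if s = 0 then ep p (HG n 5)
        else ep p (joinG (⊤ : SimpleGraph (Fin 1)) (matchG (n - 1)))) ∧
      ∀ G : SimpleGraph (Fin n), Free (broomG 5 s) G →
        (ep p G = exDP n p (broomG 5 s) ↔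
          if s = 0 then Nonempty (G ≃g HG n 5)
          else Nonempty (G ≃g joinG (⊤ : SimpleGraph (Fin 1)) (matchG (n - 1)))) := by
  intro n hn
  have hn1 : 101 ≤ n := by
    have e1 : (2*s+10)^2 = 4*(s*s) + 40*s + 100 := by ring
    omega
  have hsn : s + 5 ≤ n := by
    have e1 : (2*s+10)^2 = 4*(s*s) + 40*s + 100 := by ring
    omega
  have h2p : 1 ≤ 2^p := Nat.one_le_pow _ _ (by omega)
  by_cases hs : s = 0
  · subst hs
    simp only [reduceIte] at hyp ⊢
    have hEval : ep p (HG n 5) = (n-1)^p + 2*2^p + (n-3) := ep_hg (by omega) p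
    have hbig : ∀ c, 0 + 5 ≤ c → ∀ C : SimpleGraph (Fin c), C.Connected →
        Free (broomG 5 0) C → (∃ w, 0+4 ≤ degp C w) →
        ep p C ≤ (c-1)^p + 2*2^p + (c-1)*1 := by
      intro c hc C hconn hfr hdeg
      have h1 := (hyp c hc C hconn hfr hdeg).1
      rw [ep_hg (by omega) p] at h1
      omega
    have hbigTop : ∀ G : SimpleGraph (Fin n), G.Connected → Free (broomG 5 0) G →
        (∃ w, 0+4 ≤ degp G w) → ep p G ≤ ep p (HG n 5) :=
      fun G hc hf hd => (hyp n (by omega) G hc hf hd).1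
    have hEmax : (n-1)^p + (n-2)*1 + (2*2^p-1) ≤ ep p (HG n 5) := by
      rw [hEval]; omega
    have hMB := mainBound p 0 (2*2^p) 1 (3^p) (ep p (HG n 5)) n hp hn
      (by norm_num) (by omega) (two_two_le_three hp) hbig hbigTop hEmax
    have hfree0 : Free (broomG 5 0) (HG n 5) := free_hg (by omega)
    have hexval : exDP n p (broomG 5 0) = ep p (HG n 5) := by
      refine le_antisymm (csSup_le ⟨ep p (HG n 5), HG n 5, hfree0, rfl⟩ ?_)
        (le_csSup ⟨ep p (HG n 5), ?_⟩ ⟨HG n 5, hfree0, rfl⟩)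
      · rintro x ⟨G, hG, rfl⟩
        exact (hMB G hG).1
      · rintro x ⟨G, hG, rfl⟩
        exact (hMB G hG).1
    refine ⟨hexval, ?_⟩
    intro G hG
    rw [hexval]
    constructor
    · intro hEq
      by_cases hcb : G.Connected ∧ ∃ w, 0+4 ≤ degp G w
      · exact ((hyp n (by omega) G hcb.1 hG hcb.2).2).mp hEq
      · exact absurd hEq (Nat.ne_of_lt ((hMB G hG).2 hcb))
    · rintro ⟨φ⟩
      exact ep_iso φ p
  · simp only [if_neg hs] at hyp ⊢
    have hs1 : 1 ≤ s := by omega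
    have hbig : ∀ c, s + 5 ≤ c → ∀ C : SimpleGraph (Fin c), C.Connected →
        Free (broomG 5 s) C → (∃ w, s+4 ≤ degp C w) →
        ep p C ≤ (c-1)^p + 1 + (c-1)*2^p := by
      intro c hc C hconn hfr hdeg
      have h1 := (hyp c hc C hconn hfr hdeg).1
      have h2 : ep p (joinG (⊤ : SimpleGraph (Fin 1)) (matchG (c - 1)))
          ≤ (c-1)^p + (c-1)*2^p := ep_jg_le p (c-1)
      omega
    have hbigTop : ∀ G : SimpleGraph (Fin n), G.Connected → Free (broomG 5 s) G →
        (∃ w, s+4 ≤ degp G w) →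
        ep p G ≤ ep p (joinG (⊤ : SimpleGraph (Fin 1)) (matchG (n - 1))) :=
      fun G hc hf hd => (hyp n hsn G hc hf hd).1
    have hEmax : (n-1)^p + (n-2)*2^p + (1-1)
        ≤ ep p (joinG (⊤ : SimpleGraph (Fin 1)) (matchG (n - 1))) := by
      have h1 : (n-1)^p + (n-1-1)*2^p + 1
          ≤ ep p (joinG (⊤ : SimpleGraph (Fin 1)) (matchG (n - 1))) :=
        ep_jg_ge p (n-1) (by omega) (by omega)
      have h2 : n - 1 - 1 = n - 2 := by omega
      rw [h2] at h1
      omega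
    have hKSP : 1 ≤ (s+3)^p := Nat.one_le_pow _ _ (by omega)
    have hMB := mainBound p s 1 (2^p) ((s+3)^p)
      (ep p (joinG (⊤ : SimpleGraph (Fin 1)) (matchG (n - 1)))) n hp hn
      rfl (by omega) hKSP hbig hbigTop hEmax
    have hne : (1 + (n-1)) = n := by omega
    let e : (Fin 1 ⊕ Fin (n-1)) ≃ Fin n := finSumFinEquiv.trans (finCongr hne)
    let G0 : SimpleGraph (Fin n) := SimpleGraph.comap (⇑e.symm) (JG (n-1))
    have hφ : (joinG (⊤ : SimpleGraph (Fin 1)) (matchG (n - 1))) ≃g G0 :=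
      ⟨e, by intro a b; show (JG (n-1)).Adj (e.symm (e a)) (e.symm (e b)) ↔ _; simp⟩
    have hfree0 : Free (broomG 5 s) G0 := free_iso hφ (free_jg hs1)
    have hep0 : ep p G0 = ep p (joinG (⊤ : SimpleGraph (Fin 1)) (matchG (n - 1))) :=
      (ep_iso hφ p).symm
    have hexval : exDP n p (broomG 5 s)
        = ep p (joinG (⊤ : SimpleGraph (Fin 1)) (matchG (n - 1))) := by
      refine le_antisymm
        (csSup_le ⟨ep p G0, G0, hfree0, rfl⟩ ?_)
        (le_csSup ⟨ep p (joinG (⊤ : SimpleGraph (Fin 1)) (matchG (n - 1))), ?_⟩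
          ⟨G0, hfree0, hep0⟩)
      · rintro x ⟨G, hG, rfl⟩
        exact (hMB G hG).1
      · rintro x ⟨G, hG, rfl⟩
        exact (hMB G hG).1
    refine ⟨hexval, ?_⟩
    intro G hG
    rw [hexval]
    constructor
    · intro hEq
      by_cases hcb : G.Connected ∧ ∃ w, s+4 ≤ degp G w
      · exact ((hyp n hsn G hcb.1 hG hcb.2).2).mp hEq
      · exact absurd hEq (Nat.ne_of_lt ((hMB G hG).2 hcb))
    · rintro ⟨φ⟩
      exact ep_iso φ p

end Paper
end

section
/- Let F = P_{ℓ_1} ∪ ⋯ ∪ P_{ℓ_k} be a linear forest with ℓ_1 ≥ ⋯ ≥ ℓ_k ≥ 2, let b = Σ_{i=1}^k ⌊ℓ_i/2⌋ − 1, and let n ≥ b. Then the graph H(n,F) is F-free, i.e., H(n,F) contains no subgraph isomorphic to F. -/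
open Finset

namespace Paper

lemma uv_eq {k : ℕ} {m : Fin k → ℕ} {i1 i2 : Fin k} {a1 : Fin (m i1)} {a2 : Fin (m i2)}
    (h : (⟨i1, a1⟩ : (i : Fin k) × Fin (m i)) = ⟨i2, a2⟩) : i1 = i2 ∧ (a1 : ℕ) = (a2 : ℕ) := by
  injection h with h1 h2
  subst h1
  exact ⟨rfl, congrArg Fin.val (eq_of_heq h2)⟩

lemma sig_eq {k : ℕ} {m : Fin k → ℕ} {e1 e2 : (i : Fin k) × Fin (m i)}
    (h1 : e1.1 = e2.1) (h2 : (e1.2 : ℕ) = (e2.2 : ℕ)) : e1 = e2 := by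
  obtain ⟨i1, a1⟩ := e1
  obtain ⟨i2, a2⟩ := e2
  cases h1
  exact congrArg (Sigma.mk i1) (Fin.val_injective h2)

lemma forestG_adj {k : ℕ} {m : Fin k → ℕ} {G : ∀ i, SimpleGraph (Fin (m i))}
    {i : Fin k} {a b : Fin (m i)} (h : (G i).Adj a b) :
    (forestG m G).Adj ⟨i, a⟩ ⟨i, b⟩ := by
  rw [forestG, SimpleGraph.fromRel_adj]
  refine ⟨?_, Or.inl ⟨rfl, h⟩⟩
  intro hab
  exact h.ne (Fin.val_injective (uv_eq hab).2)

def UU {k : ℕ} (ℓ : Fin k → ℕ) (o : ℕ)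
    (ho : ∀ i : Fin k, ∀ j : ℕ, j < ℓ i / 2 → 2 * j + 1 + o < ℓ i)
    (e : (i : Fin k) × Fin (ℓ i / 2)) : (i : Fin k) × Fin (ℓ i) :=
  ⟨e.1, ⟨2 * e.2 + o, by have := ho e.1 e.2 e.2.isLt; omega⟩⟩

def VV {k : ℕ} (ℓ : Fin k → ℕ) (o : ℕ)
    (ho : ∀ i : Fin k, ∀ j : ℕ, j < ℓ i / 2 → 2 * j + 1 + o < ℓ i)
    (e : (i : Fin k) × Fin (ℓ i / 2)) : (i : Fin k) × Fin (ℓ i) :=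
  ⟨e.1, ⟨2 * e.2 + 1 + o, ho e.1 e.2 e.2.isLt⟩⟩

@[simp] lemma UU_fst {k ℓ o ho e} : (@UU k ℓ o ho e).1 = e.1 := rfl
@[simp] lemma UU_snd {k ℓ o ho e} : ((@UU k ℓ o ho e).2 : ℕ) = 2 * (e.2 : ℕ) + o := rfl
@[simp] lemma VV_fst {k ℓ o ho e} : (@VV k ℓ o ho e).1 = e.1 := rfl
@[simp] lemma VV_snd {k ℓ o ho e} : ((@VV k ℓ o ho e).2 : ℕ) = 2 * (e.2 : ℕ) + 1 + o := rfl

lemma special_edge {k n : ℕ} (ℓ : Fin k → ℕ)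
    (f : ((i : Fin k) × Fin (ℓ i)) ↪ Fin n)
    (hf : ∀ a b, (forestG ℓ (fun i => pathG (ℓ i))).Adj a b → (HGF n ℓ).Adj (f a) (f b))
    (hb1 : 1 ≤ ∑ t, ℓ t / 2)
    (o : ℕ) (ho : ∀ i : Fin k, ∀ j : ℕ, j < ℓ i / 2 → 2 * j + 1 + o < ℓ i) :
    ∃ u v : (i : Fin k) × Fin (ℓ i),
      (u.2 : ℕ) % 2 = o % 2 ∧ (u.2 : ℕ) + 1 = (v.2 : ℕ) ∧ (∀ t, Odd (ℓ t)) ∧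
      (((f u : Fin n) : ℕ) = (∑ t, ℓ t / 2) - 1 ∧ ((f v : Fin n) : ℕ) = ∑ t, ℓ t / 2 ∨
       ((f v : Fin n) : ℕ) = (∑ t, ℓ t / 2) - 1 ∧ ((f u : Fin n) : ℕ) = ∑ t, ℓ t / 2) := by
  by_contra hno
  have hadj : ∀ e : (i : Fin k) × Fin (ℓ i / 2),
      (HGF n ℓ).Adj (f (UU ℓ o ho e)) (f (VV ℓ o ho e)) := by
    intro e
    apply hf
    apply forestG_adj
    rw [pathG, SimpleGraph.pathGraph_adj]
    left
    simp only [UU_snd, VV_snd]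
    omega
  have hmin : ∀ e : (i : Fin k) × Fin (ℓ i / 2),
      min ((f (UU ℓ o ho e) : Fin n) : ℕ) ((f (VV ℓ o ho e) : Fin n) : ℕ)
        < (∑ t, ℓ t / 2) - 1 := by
    intro e
    have h := hadj e
    rw [HGF, SimpleGraph.fromRel_adj] at h
    obtain ⟨hne, h | h⟩ := h
    · rcases h with h | ⟨hodd, hA, hB⟩
      · omega
      · exact absurd ⟨UU ℓ o ho e, VV ℓ o ho e, by simp, by simp; omega, hodd,
          Or.inl ⟨hA, hB⟩⟩ hno
    · rcases h with h | ⟨hodd, hA, hB⟩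
      · omega
      · exact absurd ⟨UU ℓ o ho e, VV ℓ o ho e, by simp, by simp; omega, hodd,
          Or.inr ⟨hA, hB⟩⟩ hno
  set g : ((i : Fin k) × Fin (ℓ i / 2)) → Fin ((∑ t, ℓ t / 2) - 1) :=
    fun e => ⟨min ((f (UU ℓ o ho e) : Fin n) : ℕ) ((f (VV ℓ o ho e) : Fin n) : ℕ), hmin e⟩
    with hg
  have ginj : Function.Injective g := by
    intro e1 e2 hge
    have hval : min ((f (UU ℓ o ho e1) : Fin n) : ℕ) ((f (VV ℓ o ho e1) : Fin n) : ℕ)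
        = min ((f (UU ℓ o ho e2) : Fin n) : ℕ) ((f (VV ℓ o ho e2) : Fin n) : ℕ) :=
      congrArg Fin.val hge
    rcases min_choice ((f (UU ℓ o ho e1) : Fin n) : ℕ) ((f (VV ℓ o ho e1) : Fin n) : ℕ)
        with h1 | h1 <;>
      rcases min_choice ((f (UU ℓ o ho e2) : Fin n) : ℕ) ((f (VV ℓ o ho e2) : Fin n) : ℕ)
        with h2 | h2
    · have := f.injective (Fin.val_injective (by omega :
        ((f (UU ℓ o ho e1) : Fin n) : ℕ) = ((f (UU ℓ o ho e2) : Fin n) : ℕ)))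
      have h3 := (uv_eq this).1
      have h4 := (uv_eq this).2
      simp at h3 h4
      exact sig_eq h3 (by omega)
    · have := f.injective (Fin.val_injective (by omega :
        ((f (UU ℓ o ho e1) : Fin n) : ℕ) = ((f (VV ℓ o ho e2) : Fin n) : ℕ)))
      have h4 := (uv_eq this).2
      simp at h4
      omega
    · have := f.injective (Fin.val_injective (by omega :
        ((f (VV ℓ o ho e1) : Fin n) : ℕ) = ((f (UU ℓ o ho e2) : Fin n) : ℕ)))
      have h4 := (uv_eq this).2
      simp at h4
      omega
    · have := f.injective (Fin.val_injective (by omega :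
        ((f (VV ℓ o ho e1) : Fin n) : ℕ) = ((f (VV ℓ o ho e2) : Fin n) : ℕ)))
      have h3 := (uv_eq this).1
      have h4 := (uv_eq this).2
      simp at h3 h4
      exact sig_eq h3 (by omega)
  have hcard := Fintype.card_le_of_injective g ginj
  simp [Fintype.card_sigma, Fintype.card_fin] at hcard
  omega

/-- `H(n, F)` is `F`-free for a linear forest `F`. -/
theorem HGF_free (k n : ℕ) (hk : 1 ≤ k) (ℓ : Fin k → ℕ)
    (hdec : ∀ i j : Fin k, i ≤ j → ℓ j ≤ ℓ i) (h2 : ∀ i, 2 ≤ ℓ i)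
    (hn : (∑ t, ℓ t / 2) - 1 ≤ n) :
    Free (forestG ℓ (fun i => pathG (ℓ i))) (HGF n ℓ) := by
  rintro ⟨f, hf⟩
  have hb1 : 1 ≤ ∑ t, ℓ t / 2 := by
    have h : ℓ (⟨0, hk⟩ : Fin k) / 2 ≤ ∑ t, ℓ t / 2 := Finset.single_le_sum (f := fun t => ℓ t / 2)
      (fun i _ => Nat.zero_le _) (Finset.mem_univ (⟨0, hk⟩ : Fin k))
    have h' := h2 ⟨0, hk⟩
    omega
  obtain ⟨u0, v0, hp0, hs0, hodd, hc0⟩ := special_edge ℓ f hf hb1 0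
    (fun i j hj => by omega)
  obtain ⟨u1, v1, hp1, hs1, -, hc1⟩ := special_edge ℓ f hf hb1 1
    (fun i j hj => by obtain ⟨m, hm⟩ := hodd i; omega)
  rcases hc0 with ⟨hA, hB⟩ | ⟨hA, hB⟩ <;> rcases hc1 with ⟨hC, hD⟩ | ⟨hC, hD⟩
  · have h := f.injective (Fin.val_injective (hA.trans hC.symm))
    have := congrArg (fun x : (i : Fin k) × Fin (ℓ i) => (x.2 : ℕ)) h
    omega
  · have h1 := f.injective (Fin.val_injective (hA.trans hC.symm))
    have h2' := f.injective (Fin.val_injective (hB.trans hD.symm))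
    have e1 := congrArg (fun x : (i : Fin k) × Fin (ℓ i) => (x.2 : ℕ)) h1
    have e2 := congrArg (fun x : (i : Fin k) × Fin (ℓ i) => (x.2 : ℕ)) h2'
    omega
  · have h1 := f.injective (Fin.val_injective (hA.trans hC.symm))
    have h2' := f.injective (Fin.val_injective (hB.trans hD.symm))
    have e1 := congrArg (fun x : (i : Fin k) × Fin (ℓ i) => (x.2 : ℕ)) h1
    have e2 := congrArg (fun x : (i : Fin k) × Fin (ℓ i) => (x.2 : ℕ)) h2'
    omega
  · have h := f.injective (Fin.val_injective (hB.trans hD.symm))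
    have := congrArg (fun x : (i : Fin k) × Fin (ℓ i) => (x.2 : ℕ)) h
    omega

end Paper
end

section
/- Let k ≥ 2 and F = S_{r_1} ∪ ⋯ ∪ S_{r_k} be a star forest with r_1 ≥ ⋯ ≥ r_k ≥ 1. Let G be an F-free graph on n vertices, and let U ⊆ V(G) with |U| = k − 1 such that every vertex v ∈ U has degree d_G(v) ≥ Σ_{i=1}^k r_i + k. Then the graph G − U obtained by deleting the vertices of U is S_{r_k}-free; consequently G is a subgraph of a graph of the form K_{k−1} + L where L is an S_{r_k}-free graph on n − k + 1 vertices. -/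
open Finset

namespace Paper

lemma greedy {n K : ℕ} (N : Fin K → Finset (Fin n))
    (r' : Fin K → ℕ) (B : Finset (Fin n))
    (hdeg : ∀ i, B.card + ∑ j, r' j ≤ (N i).card) :
    ∃ S : Fin K → Finset (Fin n),
      (∀ i, S i ⊆ N i) ∧
      (∀ i, (S i).card = r' i) ∧
      (∀ i, Disjoint (S i) B) ∧
      (∀ i j, i ≠ j → Disjoint (S i) (S j)) := by
  suffices h : ∀ I : Finset (Fin K), ∃ S : Fin K → Finset (Fin n),
      (∀ i ∈ I, S i ⊆ N i ∧ (S i).card = r' i ∧ Disjoint (S i) B) ∧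
      (∀ i ∉ I, S i = ∅) ∧ (∀ i j, i ≠ j → Disjoint (S i) (S j)) by
    obtain ⟨S, h1, _, h3⟩ := h univ
    exact ⟨S, fun i => (h1 i (mem_univ i)).1, fun i => (h1 i (mem_univ i)).2.1,
      fun i => (h1 i (mem_univ i)).2.2, h3⟩
  intro I
  induction I using Finset.induction_on with
  | empty => exact ⟨fun _ => ∅, by simp, by simp, by simp⟩
  | @insert a I ha ih =>
    obtain ⟨S, h1, h2, h3⟩ := ih
    set W := B ∪ I.biUnion S with hW
    have hWcard : W.card ≤ B.card + ∑ i ∈ I, r' i := by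
      calc W.card ≤ B.card + (I.biUnion S).card := Finset.card_union_le _ _
        _ ≤ B.card + ∑ i ∈ I, (S i).card := by
            gcongr; exact Finset.card_biUnion_le
        _ = B.card + ∑ i ∈ I, r' i := by
            congr 1; exact Finset.sum_congr rfl fun i hi => (h1 i hi).2.1
    have hsum : ∑ i ∈ I, r' i + r' a ≤ ∑ j, r' j := by
      have : ∑ i ∈ insert a I, r' i ≤ ∑ j, r' j :=
        Finset.sum_le_sum_of_subset (Finset.subset_univ _)
      rwa [Finset.sum_insert ha, add_comm] at this
    have hav : r' a ≤ ((N a) \ W).card := by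
      have h0 := hdeg a
      have hc := Finset.le_card_sdiff W (N a)
      omega
    obtain ⟨t, htsub, htcard⟩ := Finset.exists_subset_card_eq hav
    refine ⟨Function.update S a t, ?_, ?_, ?_⟩
    · intro i hi
      rcases Finset.mem_insert.1 hi with h | h
      · subst h
        simp only [Function.update_self]
        refine ⟨fun x hx => (Finset.mem_sdiff.1 (htsub hx)).1, htcard, ?_⟩
        refine Finset.disjoint_left.2 fun x hx hxB => ?_
        exact (Finset.mem_sdiff.1 (htsub hx)).2 (Finset.mem_union_left _ hxB)
      · rw [Function.update_of_ne (by rintro rfl; exact ha h)]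
        exact h1 i h
    · intro i hi
      rw [Function.update_of_ne (by rintro rfl; exact hi (Finset.mem_insert_self i I))]
      exact h2 i fun h => hi (Finset.mem_insert_of_mem h)
    · intro i j hij
      have key : ∀ j, j ≠ a → Disjoint t (S j) := by
        intro j hj
        by_cases hjI : j ∈ I
        · refine Finset.disjoint_left.2 fun x hx hxS => ?_
          exact (Finset.mem_sdiff.1 (htsub hx)).2
            (Finset.mem_union_right _ (Finset.mem_biUnion.2 ⟨j, hjI, hxS⟩))
        · rw [h2 j hjI]; exact Finset.disjoint_empty_right _
      rcases eq_or_ne i a with rfl | hi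
      · rw [Function.update_self, Function.update_of_ne (Ne.symm hij)]
        exact key j (Ne.symm hij)
      · rw [Function.update_of_ne hi]
        rcases eq_or_ne j a with rfl | hj
        · rw [Function.update_self]
          exact (key i hi).symm
        · rw [Function.update_of_ne hj]
          exact h3 i j hij

lemma forestG_adj_s19 {k : ℕ} (m : Fin k → ℕ) (Gs : ∀ i, SimpleGraph (Fin (m i)))
    (x y : (i : Fin k) × Fin (m i)) :
    (forestG m Gs).Adj x y ↔ x ≠ y ∧
      ((∃ h : x.1 = y.1, (Gs y.1).Adj (h ▸ x.2) y.2) ∨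
       (∃ h : y.1 = x.1, (Gs x.1).Adj (h ▸ y.2) x.2)) := by
  simp [forestG, SimpleGraph.fromRel_adj]

lemma starG_adj {r : ℕ} (a b : Fin (r + 1)) :
    (starG r).Adj a b ↔ a ≠ b ∧ (a = 0 ∨ b = 0) := by
  simp [starG, SimpleGraph.fromRel_adj]

lemma buildCopy {n k : ℕ} (hk : 2 ≤ k) (r : Fin k → ℕ) (hr1 : ∀ i, 1 ≤ r i)
    (G : SimpleGraph (Fin n))
    (u : Fin (k - 1) → Fin n) (hu : Function.Injective u)
    (S : Fin (k - 1) → Finset (Fin n))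
    (hScard : ∀ j : Fin (k - 1), (S j).card = r ⟨j, by omega⟩)
    (hSnbr : ∀ j : Fin (k - 1), ∀ x ∈ S j, G.Adj (u j) x)
    (hSu : ∀ j j' : Fin (k - 1), ∀ x ∈ S j, x ≠ u j')
    (hSS : ∀ j j' : Fin (k - 1), j ≠ j' → Disjoint (S j) (S j'))
    (g : Fin (r ⟨k - 1, by omega⟩ + 1) → Fin n) (hginj : Function.Injective g)
    (hgadj : ∀ a b, (starG (r ⟨k - 1, by omega⟩)).Adj a b → G.Adj (g a) (g b))
    (hgu : ∀ a j, g a ≠ u j)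
    (hgS : ∀ a j, g a ∉ S j) :
    Copy (forestG (fun i => r i + 1) (fun i => starG (r i))) G := by
  classical
  set F : ((i : Fin k) × Fin (r i + 1)) → Fin n := fun x =>
    if h : (x.1 : ℕ) < k - 1 then
      (if (x.2 : ℕ) = 0 then u ⟨(x.1 : ℕ), h⟩
       else ((S ⟨(x.1 : ℕ), h⟩).orderIsoOfFin (hScard ⟨(x.1 : ℕ), h⟩)
          ⟨(x.2 : ℕ) - 1, by
            show (x.2 : ℕ) - 1 < r x.1
            have h2 := x.2.isLt
            have h1 := hr1 x.1
            omega⟩ : Fin n))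
    else g ⟨(x.2 : ℕ), by
      have hx1 : x.1 = ⟨k - 1, by omega⟩ :=
        Fin.ext (show (x.1 : ℕ) = k - 1 by have := x.1.isLt; omega)
      have hr : r x.1 = r ⟨k - 1, by omega⟩ := congrArg r hx1
      exact lt_of_lt_of_le x.2.isLt (le_of_eq (congrArg (· + 1) hr))⟩ with hF
  -- basic facts about values of F
  have hcenter : ∀ (i : Fin k) (hi : (i : ℕ) < k - 1) (a : Fin (r i + 1)) (ha : (a : ℕ) = 0),
      F ⟨i, a⟩ = u ⟨(i : ℕ), hi⟩ := by
    intro i hi a ha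
    simp only [hF, dif_pos hi, if_pos ha]
  have hleafmem : ∀ (i : Fin k) (hi : (i : ℕ) < k - 1) (a : Fin (r i + 1)) (ha : ¬ (a : ℕ) = 0),
      F ⟨i, a⟩ ∈ S ⟨(i : ℕ), hi⟩ := by
    intro i hi a ha
    simp only [hF, dif_pos hi, if_neg ha]
    exact ((S ⟨(i : ℕ), hi⟩).orderIsoOfFin _ _).2
  have hgval : ∀ (i : Fin k) (hi : ¬ (i : ℕ) < k - 1) (a : Fin (r i + 1)),
      F ⟨i, a⟩ = g ⟨(a : ℕ), by
        have hx1 : i = ⟨k - 1, by omega⟩ :=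
          Fin.ext (show (i : ℕ) = k - 1 by have := i.isLt; omega)
        have hr : r i = r ⟨k - 1, by omega⟩ := congrArg r hx1
        exact lt_of_lt_of_le a.isLt (le_of_eq (congrArg (· + 1) hr))⟩ := by
    intro i hi a
    simp only [hF, dif_neg hi]
  refine ⟨⟨F, ?_⟩, ?_⟩
  · -- injectivity
    rintro ⟨i, a⟩ ⟨j, b⟩ hxy
    by_cases hi : (i : ℕ) < k - 1 <;> by_cases hj : (j : ℕ) < k - 1
    · by_cases ha : (a : ℕ) = 0 <;> by_cases hb : (b : ℕ) = 0
      · rw [hcenter i hi a ha, hcenter j hj b hb] at hxy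
        have h8' := congrArg Fin.val (hu hxy)
        have h8 : (i : ℕ) = (j : ℕ) := h8'
        have hij : i = j := Fin.ext h8
        subst hij
        exact congrArg _ (Fin.ext (by omega))
      · rw [hcenter i hi a ha] at hxy
        exact absurd hxy.symm (hSu ⟨j, hj⟩ ⟨i, hi⟩ _ (hleafmem j hj b hb))
      · rw [hcenter j hj b hb] at hxy
        exact absurd hxy (hSu ⟨i, hi⟩ ⟨j, hj⟩ _ (hleafmem i hi a ha))
      · by_cases hij : i = j
        · subst hij
          simp only [hF, dif_pos hi, if_neg ha, if_neg hb] at hxy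
          have h6 := ((S ⟨(i : ℕ), hi⟩).orderIsoOfFin
            (hScard ⟨(i : ℕ), hi⟩)).injective (Subtype.ext hxy)
          have h7 : (a : ℕ) - 1 = (b : ℕ) - 1 := congrArg Fin.val h6
          exact congrArg _ (Fin.ext (by omega))
        · have hne : (⟨(i : ℕ), hi⟩ : Fin (k - 1)) ≠ ⟨(j : ℕ), hj⟩ := by
            intro h
            have h8' := congrArg Fin.val h
            have h8 : (i : ℕ) = (j : ℕ) := h8'
            exact hij (Fin.ext h8)
          have hmem := hleafmem j hj b hb
          rw [← hxy] at hmem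
          exact absurd hmem (Finset.disjoint_left.1 (hSS _ _ hne) (hleafmem i hi a ha))
    · rw [hgval j hj b] at hxy
      by_cases ha : (a : ℕ) = 0
      · rw [hcenter i hi a ha] at hxy
        exact absurd hxy.symm (hgu _ _)
      · have hmem := hleafmem i hi a ha
        rw [hxy] at hmem
        exact absurd hmem (hgS _ _)
    · rw [hgval i hi a] at hxy
      by_cases hb : (b : ℕ) = 0
      · rw [hcenter j hj b hb] at hxy
        exact absurd hxy (hgu _ _)
      · have hmem := hleafmem j hj b hb
        rw [← hxy] at hmem
        exact absurd hmem (hgS _ _)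
    · have hij : i = j := Fin.ext (by have := i.isLt; have := j.isLt; omega)
      subst hij
      rw [hgval i hi a, hgval i hj b] at hxy
      have h6' := congrArg Fin.val (hginj hxy)
      have h6 : (a : ℕ) = (b : ℕ) := h6'
      exact congrArg _ (Fin.ext h6)
  · -- adjacency
    have key : ∀ (i : Fin k) (a b : Fin (r i + 1)), (a : ℕ) = 0 → ¬(b : ℕ) = 0 →
        G.Adj (F ⟨i, a⟩) (F ⟨i, b⟩) := by
      intro i a b ha hb
      by_cases hi : (i : ℕ) < k - 1
      · rw [hcenter i hi a ha]
        exact hSnbr ⟨(i : ℕ), hi⟩ _ (hleafmem i hi b hb)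
      · rw [hgval i hi a, hgval i hi b]
        apply hgadj
        rw [starG_adj]
        refine ⟨?_, Or.inl ?_⟩
        · simp only [ne_eq, Fin.mk.injEq]; omega
        · exact Fin.ext (by simpa using ha)
    rintro ⟨i, a⟩ ⟨j, b⟩ hab
    rw [forestG_adj_s19] at hab
    obtain ⟨hne, hor⟩ := hab
    rcases hor with ⟨h, hadj⟩ | ⟨h, hadj⟩
    · obtain rfl : i = j := h
      have hadj' : (starG (r i)).Adj a b := hadj
      rw [starG_adj] at hadj'
      obtain ⟨hne', h0 | h0⟩ := hadj'
      · exact key i a b (by simp [h0]) (by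
          intro hb
          exact hne' (by subst h0; exact (Fin.ext (by simpa using hb.symm))))
      · exact (key i b a (by simp [h0]) (by
          intro hb
          exact hne' (by subst h0; exact (Fin.ext (by simpa using hb))))).symm
    · obtain rfl : j = i := h
      have hadj' : (starG (r j)).Adj b a := hadj
      rw [starG_adj] at hadj'
      obtain ⟨hne', h0 | h0⟩ := hadj'
      · exact (key j b a (by simp [h0]) (by
          intro hb
          exact hne' (by subst h0; exact (Fin.ext (by simpa using hb.symm))))).symm
      · exact key j a b (by simp [h0]) (by
          intro hb
          exact hne' (by subst h0; exact (Fin.ext (by simpa using hb))))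

/-- deleting high-degree vertices from a star-forest-free graph. -/
theorem starForest_delete (k n : ℕ) (hk : 2 ≤ k) (r : Fin k → ℕ)
    (hdec : ∀ i j : Fin k, i ≤ j → r j ≤ r i) (hr1 : ∀ i, 1 ≤ r i)
    (G : SimpleGraph (Fin n))
    (hfree : Free (forestG (fun i => r i + 1) (fun i => starG (r i))) G)
    (U : Finset (Fin n)) (hU : U.card = k - 1)
    (hdegU : ∀ v ∈ U, (∑ i, r i) + k ≤ degp G v) :
    Free (starG (r ⟨k - 1, by omega⟩)) (G.induce ((↑U : Set (Fin n))ᶜ)) ∧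
    ∃ L : SimpleGraph (Fin (n - (k - 1))), Free (starG (r ⟨k - 1, by omega⟩)) L ∧
      Copy G (joinG (⊤ : SimpleGraph (Fin (k - 1))) L) := by
  classical
  have hKlt : k - 1 < k := by omega
  have part1 : Free (starG (r ⟨k - 1, hKlt⟩)) (G.induce ((↑U : Set (Fin n))ᶜ)) := by
    rintro ⟨g, hg⟩
    let eU : ↥U ≃ Fin (k - 1) := U.equivFinOfCardEq hU
    let u : Fin (k - 1) → Fin n := fun i => ((eU.symm i : ↥U) : Fin n)
    have huinj : Function.Injective u := fun i j h => eU.symm.injective (Subtype.ext h)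
    have huU : ∀ i, u i ∈ U := fun i => (eU.symm i).2
    let g' : Fin (r ⟨k - 1, hKlt⟩ + 1) → Fin n := fun a => ((g a : _) : Fin n)
    have hg'inj : Function.Injective g' := fun a b h => g.injective (Subtype.ext h)
    have hg'U : ∀ a, g' a ∉ U := fun a h => (g a).2 (Finset.mem_coe.2 h)
    let T : Finset (Fin n) := Finset.image g' univ
    have hTcard : T.card = r ⟨k - 1, hKlt⟩ + 1 := by
      rw [Finset.card_image_of_injective _ hg'inj, card_univ, Fintype.card_fin]
    let ι : Fin (k - 1) → Fin k := fun j => ⟨(j : ℕ), by omega⟩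
    let r' : Fin (k - 1) → ℕ := fun j => r (ι j)
    have hsum : ∑ j, r' j + r ⟨k - 1, hKlt⟩ ≤ ∑ i, r i := by
      have hιinj : ∀ x ∈ (univ : Finset (Fin (k - 1))), ∀ y ∈ univ, ι x = ι y → x = y := by
        intro x _ y _ h
        have h8' := congrArg Fin.val h
        have h8 : (x : ℕ) = (y : ℕ) := h8'
        exact Fin.ext h8
      have himg : ∑ i ∈ (univ : Finset (Fin (k - 1))).image ι, r i = ∑ j, r' j :=
        Finset.sum_image hιinj
      have hnot : (⟨k - 1, hKlt⟩ : Fin k) ∉ (univ : Finset (Fin (k - 1))).image ι := by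
        simp only [Finset.mem_image, Finset.mem_univ, true_and, not_exists]
        intro j h
        have h8' := congrArg Fin.val h
        have h8 : (j : ℕ) = k - 1 := h8'
        have := j.isLt
        omega
      have hle : ∑ i ∈ insert (⟨k - 1, hKlt⟩ : Fin k) ((univ : Finset (Fin (k - 1))).image ι),
          r i ≤ ∑ i, r i := Finset.sum_le_sum_of_subset (Finset.subset_univ _)
      rw [Finset.sum_insert hnot] at hle
      omega
    have hdeg : ∀ i, (U ∪ T).card + ∑ j, r' j ≤ (G.neighborFinset (u i)).card := by
      intro i
      have h1 := hdegU (u i) (huU i)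
      have hdegp : degp G (u i) = (G.neighborFinset (u i)).card := by
        rw [degp, Set.ncard_eq_toFinset_card', ← SimpleGraph.neighborFinset_def]
      have hcu := Finset.card_union_le U T
      omega
    obtain ⟨S, hSsub, hScard, hSB, hSS⟩ := greedy (fun i => G.neighborFinset (u i)) r' (U ∪ T) hdeg
    have hSnbr : ∀ j : Fin (k - 1), ∀ x ∈ S j, G.Adj (u j) x := by
      intro j x hx
      exact (SimpleGraph.mem_neighborFinset _ _ _).1 (hSsub j hx)
    have hSu : ∀ j j' : Fin (k - 1), ∀ x ∈ S j, x ≠ u j' := by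
      intro j j' x hx h
      exact Finset.disjoint_left.1 (hSB j) hx (Finset.mem_union_left _ (h ▸ huU j'))
    have hgadj : ∀ a b, (starG (r ⟨k - 1, hKlt⟩)).Adj a b → G.Adj (g' a) (g' b) :=
      fun a b h => hg a b h
    have hgu : ∀ a j, g' a ≠ u j := fun a j h => hg'U a (h ▸ huU j)
    have hgS : ∀ a j, g' a ∉ S j := by
      intro a j h
      exact Finset.disjoint_left.1 (hSB j) h
        (Finset.mem_union_right _ (Finset.mem_image_of_mem g' (Finset.mem_univ a)))
    exact hfree (buildCopy hk r hr1 G u huinj S hScard hSnbr hSu hSS g' hg'inj hgadj hgu hgS)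
  refine ⟨part1, ?_⟩
  have hcard : Fintype.card ((↑U : Set (Fin n))ᶜ : Set (Fin n)) = n - (k - 1) := by
    rw [Fintype.card_compl_set]
    simp [hU]
  let e : ((↑U : Set (Fin n))ᶜ : Set (Fin n)) ≃ Fin (n - (k - 1)) := Fintype.equivFinOfCardEq hcard
  let eU : ↥U ≃ Fin (k - 1) := U.equivFinOfCardEq hU
  refine ⟨(G.induce ((↑U : Set (Fin n))ᶜ)).comap e.symm, ?_, ?_⟩
  · rintro ⟨f, hf⟩
    exact part1 ⟨f.trans e.symm.toEmbedding, hf⟩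
  · refine ⟨⟨fun v => if h : v ∈ U then Sum.inl (eU ⟨v, h⟩)
      else Sum.inr (e ⟨v, by simpa using h⟩), ?_⟩, ?_⟩
    · intro v w hvw
      simp only [] at hvw
      by_cases hv : v ∈ U <;> by_cases hw : w ∈ U
      · rw [dif_pos hv, dif_pos hw] at hvw
        exact congrArg Subtype.val (eU.injective (Sum.inl.inj hvw))
      · rw [dif_pos hv, dif_neg hw] at hvw
        exact absurd hvw (Sum.inl_ne_inr)
      · rw [dif_neg hv, dif_pos hw] at hvw
        exact absurd hvw (Sum.inr_ne_inl)
      · rw [dif_neg hv, dif_neg hw] at hvw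
        exact congrArg Subtype.val (e.injective (Sum.inr.inj hvw))
    · intro v w hadj
      show (joinG _ _).Adj (dite (v ∈ U) _ _) (dite (w ∈ U) _ _)
      have hne := hadj.ne
      by_cases hv : v ∈ U <;> by_cases hw : w ∈ U
      · rw [dif_pos hv, dif_pos hw]
        have h2 : eU ⟨v, hv⟩ ≠ eU ⟨w, hw⟩ := by
          intro h; exact hne (congrArg Subtype.val (eU.injective h))
        simp [joinG, SimpleGraph.fromRel_adj, h2]
      · rw [dif_pos hv, dif_neg hw]
        simp [joinG, SimpleGraph.fromRel_adj]
      · rw [dif_neg hv, dif_pos hw]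
        simp [joinG, SimpleGraph.fromRel_adj]
      · rw [dif_neg hv, dif_neg hw]
        have h2 : e ⟨v, by simpa using hv⟩ ≠ e ⟨w, by simpa using hw⟩ := by
          intro h; exact hne (congrArg Subtype.val (e.injective h))
        simp [joinG, SimpleGraph.fromRel_adj, h2]
        exact Or.inl hadj

end Paper
end
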